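/- arXiv:1501.05376 — 9 statements merged into one kernel-verified Lean document; each statement's English description precedes it below -/
import Mathlib

section
/- Let N ≥ 1 be an integer and let X and Y be independent random variables, each with the Gamma(N,1) distribution. Let a, b, c, d > 0 be real constants. Then Prob( Y·(c·X² − d·X) < a·X + b ) = 1 − ∫_{d/c}^{∞} [Γ(N, (a·x + b)/(c·x² − d·x)) / Γ(N)] · (x^{N−1} e^{−x} / Γ(N)) dx. -/
open MeasureTheory ProbabilityTheory Filter

/-- The upper incomplete gamma function `Γ(a, z) = ∫_z^∞ t^(a-1) e^(-t) dt`. -/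
noncomputable def upperGamma (a z : ℝ) : ℝ :=
  ∫ t in Set.Ioi z, t ^ (a - 1) * Real.exp (-t)

section Aux

open Real Set

/-- auxiliary: the lower partial gamma integral. -/
noncomputable def lowGamma (N : ℕ) (y : ℝ) : ℝ :=
  ∫ t in Set.Ioc 0 y, t ^ ((N : ℝ) - 1) * Real.exp (-t)

lemma gamma_integrand_integrableOn {N : ℕ} (hN : (0:ℝ) < N) :
    IntegrableOn (fun t : ℝ => t ^ ((N:ℝ) - 1) * Real.exp (-t)) (Ioi 0) :=
  (Real.GammaIntegral_convergent hN).congr_fun (fun _ _ => mul_comm _ _) measurableSet_Ioi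

lemma lowGamma_mono {N : ℕ} (hN : (0:ℝ) < N) : Monotone (lowGamma N) := by
  intro y₁ y₂ h
  refine setIntegral_mono_set
    ((gamma_integrand_integrableOn hN).mono_set Ioc_subset_Ioi_self) ?_
    (HasSubset.Subset.eventuallyLE (Ioc_subset_Ioc_right h))
  refine (ae_restrict_iff' measurableSet_Ioc).2 (ae_of_all _ fun x hx => ?_)
  have hx0 : 0 < x := hx.1
  positivity

lemma lowGamma_measurable {N : ℕ} (hN : (0:ℝ) < N) : Measurable (lowGamma N) :=
  (lowGamma_mono hN).measurable

lemma lowGamma_add_upperGamma {N : ℕ} (hN : (0:ℝ) < N) {z : ℝ} (hz : 0 < z) :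
    lowGamma N z + upperGamma N z = Real.Gamma N := by
  rw [Real.Gamma_eq_integral hN]
  have : ∫ x in Ioi (0:ℝ), Real.exp (-x) * x ^ ((N:ℝ) - 1)
      = ∫ x in Ioi (0:ℝ), x ^ ((N:ℝ) - 1) * Real.exp (-x) :=
    setIntegral_congr_fun measurableSet_Ioi fun x _ => mul_comm _ _
  rw [this, ← Ioc_union_Ioi_eq_Ioi hz.le,
    setIntegral_union (Ioc_disjoint_Ioi le_rfl) measurableSet_Ioi
      ((gamma_integrand_integrableOn hN).mono_set Ioc_subset_Ioi_self)
      ((gamma_integrand_integrableOn hN).mono_set (Ioi_subset_Ioi hz.le))]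
  rfl

lemma upperGamma_eq {N : ℕ} (hN : (0:ℝ) < N) {z : ℝ} (hz : 0 < z) :
    upperGamma N z = Real.Gamma N - lowGamma N z := by
  have := lowGamma_add_upperGamma hN hz; linarith

lemma upperGamma_nonneg {N : ℕ} {z : ℝ} (hz : 0 < z) : 0 ≤ upperGamma N z := by
  refine setIntegral_nonneg measurableSet_Ioi fun x hx => ?_
  have hx0 : 0 < x := hz.trans hx
  positivity

lemma upperGamma_le_Gamma {N : ℕ} (hN : (0:ℝ) < N) {z : ℝ} (hz : 0 < z) :
    upperGamma N z ≤ Real.Gamma N := by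
  have h := lowGamma_add_upperGamma hN hz
  have h0 : 0 ≤ lowGamma N z := by
    refine setIntegral_nonneg measurableSet_Ioc fun x hx => ?_
    have hx0 : 0 < x := hx.1
    positivity
  linarith

end Aux

/-- **Theorem 1** (exact outage probability of the noise-limited multi-antenna
energy-harvesting relay system): if `X, Y` are independent `Gamma(N,1)` random variables and
`a, b, c, d > 0`, then
`Prob(Y (c X² − d X) < a X + b) = 1 − ∫_{d/c}^∞ (Γ(N,(a x + b)/(c x² − d x))/Γ(N)) ·
(x^{N−1} e^{−x}/Γ(N)) dx`. -/
theorem outage_noise_limited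
    {Ω : Type*} [MeasureSpace Ω] [IsProbabilityMeasure (ℙ : Measure Ω)]
    (N : ℕ) (hN : 1 ≤ N) (X Y : Ω → ℝ)
    (hXY : IndepFun X Y ℙ)
    (hX : Measure.map X ℙ = gammaMeasure N 1)
    (hY : Measure.map Y ℙ = gammaMeasure N 1)
    (a b c d : ℝ) (ha : 0 < a) (hb : 0 < b) (hc : 0 < c) (hd : 0 < d) :
    (ℙ {ω | Y ω * (c * X ω ^ 2 - d * X ω) < a * X ω + b}).toReal =
      1 - ∫ x in Set.Ioi (d / c),
        (upperGamma N ((a * x + b) / (c * x ^ 2 - d * x)) / Real.Gamma N) *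
          (x ^ ((N : ℝ) - 1) * Real.exp (-x) / Real.Gamma N) := by
  classical
  have hNR : (0:ℝ) < N := by exact_mod_cast hN
  have hΓ : 0 < Real.Gamma N := Real.Gamma_pos_of_pos hNR
  set μ : Measure ℝ := gammaMeasure N 1 with hμdef
  have hprob : IsProbabilityMeasure μ := isProbabilityMeasure_gammaMeasure hNR one_pos
  -- measurability of X, Y
  have hXm : AEMeasurable X ℙ := by
    by_contra h
    rw [Measure.map_of_not_aemeasurable h] at hX
    exact (IsProbabilityMeasure.ne_zero μ) hX.symm
  have hYm : AEMeasurable Y ℙ := by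
    by_contra h
    rw [Measure.map_of_not_aemeasurable h] at hY
    exact (IsProbabilityMeasure.ne_zero μ) hY.symm
  have hmap : Measure.map (fun ω => (X ω, Y ω)) ℙ = μ.prod μ := by
    rw [(indepFun_iff_map_prod_eq_prod_map_map hXm hYm).mp hXY, hX, hY]
  set S : Set (ℝ × ℝ) := {p | p.2 * (c * p.1 ^ 2 - d * p.1) < a * p.1 + b} with hSdef
  have hSm : MeasurableSet S := by
    apply measurableSet_lt <;> measurability
  have hP : ℙ {ω | Y ω * (c * X ω ^ 2 - d * X ω) < a * X ω + b} = (μ.prod μ) S := by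
    rw [← hmap, Measure.map_apply_of_aemeasurable (hXm.prodMk hYm) hSm]
    rfl
  have hprod : (μ.prod μ) S = ∫⁻ x, μ (Prod.mk x ⁻¹' S) ∂μ := Measure.prod_apply hSm
  -- basic measure facts for μ
  have hIic0 : μ (Set.Iic 0) = 0 := by
    have h1 : μ (Set.Iio 0) = 0 := by
      rw [hμdef, gammaMeasure, withDensity_apply _ measurableSet_Iio]
      exact lintegral_gammaPDF_of_nonpos le_rfl
    have h2 : μ {(0:ℝ)} = 0 :=
      (withDensity_absolutelyContinuous _ _) (Real.volume_singleton)
    rw [← Set.Iio_union_right]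
    exact measure_union_null h1 h2
  have hIoi0 : μ (Set.Ioi 0) = 1 := by
    have := measure_add_measure_compl (μ := μ) (measurableSet_Iic (a := (0:ℝ)))
    rw [Set.compl_Iic, hIic0, zero_add, measure_univ] at this
    exact this
  -- the value of μ on Ici z for z > 0
  have hIci : ∀ z : ℝ, 0 < z →
      μ (Set.Ici z) = ENNReal.ofReal (upperGamma N z / Real.Gamma N) := by
    intro z hz
    rw [hμdef, gammaMeasure, withDensity_apply _ measurableSet_Ici]
    have hcongr : ∀ x ∈ Set.Ici z, gammaPDF N 1 x
        = ENNReal.ofReal (x ^ ((N:ℝ)-1) * Real.exp (-x) / Real.Gamma N) := by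
      intro x hx
      rw [gammaPDF_of_nonneg (hz.le.trans hx)]
      congr 1
      rw [Real.one_rpow]
      ring_nf
    have hint : IntegrableOn
        (fun x : ℝ => x ^ ((N:ℝ)-1) * Real.exp (-x) / Real.Gamma N) (Set.Ici z) := by
      exact ((gamma_integrand_integrableOn hNR).mono_set
        (Set.Ici_subset_Ioi.mpr hz)).div_const _
    have hnn : 0 ≤ᵐ[volume.restrict (Set.Ici z)]
        fun x : ℝ => x ^ ((N:ℝ)-1) * Real.exp (-x) / Real.Gamma N := by
      refine (ae_restrict_iff' measurableSet_Ici).2 (ae_of_all _ fun x hx => ?_)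
      have hx0 : 0 < x := hz.trans_le hx
      positivity
    rw [setLIntegral_congr_fun_ae measurableSet_Ici (ae_of_all _ hcongr),
      ← ofReal_integral_eq_lintegral_ofReal hint hnn]
    congr 1
    rw [integral_Ici_eq_integral_Ioi, upperGamma, integral_div]
  -- measurable surrogate for the conditional tail probability
  set q : ℝ → ℝ := fun x =>
    (Real.Gamma N - lowGamma N ((a * x + b) / (c * x ^ 2 - d * x))) / Real.Gamma N with hqdef
  have hzm : Measurable fun x : ℝ => (a * x + b) / (c * x ^ 2 - d * x) :=
    ((measurable_id.const_mul a).add_const b).div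
      (((measurable_id.pow_const 2).const_mul c).sub (measurable_id.const_mul d))
  have hqm : Measurable q := by
    apply Measurable.div_const
    apply Measurable.const_sub
    exact (lowGamma_measurable hNR).comp hzm
  have hdc : 0 < d / c := div_pos hd hc
  have hx_facts : ∀ x : ℝ, d / c < x → 0 < c * x ^ 2 - d * x := by
    intro x hx
    have hx0 : 0 < x := hdc.trans hx
    have h1 : d < c * x := by
      have := (div_lt_iff₀ hc).mp hx
      linarith
    nlinarith
  have hq_eq : ∀ x : ℝ, d / c < x →
      q x = upperGamma N ((a * x + b) / (c * x ^ 2 - d * x)) / Real.Gamma N := by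
    intro x hx
    have hg := hx_facts x hx
    have hx0 : 0 < x := hdc.trans hx
    have hz : 0 < (a * x + b) / (c * x ^ 2 - d * x) := div_pos (by positivity) hg
    show (Real.Gamma N - lowGamma N _) / Real.Gamma N = _
    rw [upperGamma_eq hNR hz]
  have hq01 : ∀ x : ℝ, d / c < x → 0 ≤ q x ∧ q x ≤ 1 := by
    intro x hx
    have hg := hx_facts x hx
    have hx0 : 0 < x := hdc.trans hx
    have hz : 0 < (a * x + b) / (c * x ^ 2 - d * x) := div_pos (by positivity) hg
    rw [hq_eq x hx]
    refine ⟨div_nonneg (upperGamma_nonneg hz) hΓ.le, ?_⟩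
    rw [div_le_one hΓ]
    exact upperGamma_le_Gamma hNR hz
  -- slice values
  have hslice1 : ∀ x ∈ Set.Ioc 0 (d / c), μ (Prod.mk x ⁻¹' S) = 1 := by
    intro x hx
    refine le_antisymm prob_le_one ?_
    rw [← hIoi0]
    refine measure_mono fun y hy => ?_
    have hy0 : (0:ℝ) < y := hy
    have hg : c * x ^ 2 - d * x ≤ 0 := by
      have h1 : c * x ≤ d := by
        have := (le_div_iff₀ hc).mp hx.2
        linarith
      nlinarith [hx.1]
    have h2 : y * (c * x ^ 2 - d * x) ≤ 0 := mul_nonpos_of_nonneg_of_nonpos hy0.le hg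
    have hpos : 0 < a * x + b := by nlinarith [hx.1]
    show y * (c * x ^ 2 - d * x) < a * x + b
    linarith
  have hslice2 : ∀ x ∈ Set.Ioi (d / c), μ (Prod.mk x ⁻¹' S) = 1 - ENNReal.ofReal (q x) := by
    intro x hx
    have hg := hx_facts x hx
    have hx0 : 0 < x := hdc.trans hx
    have hz : 0 < (a * x + b) / (c * x ^ 2 - d * x) := div_pos (by positivity) hg
    have hset : Prod.mk x ⁻¹' S = Set.Iio ((a * x + b) / (c * x ^ 2 - d * x)) := by
      ext y
      simp only [hSdef, Set.mem_preimage, Set.mem_setOf_eq, Set.mem_Iio]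
      exact (lt_div_iff₀ hg).symm
    rw [hset, ← Set.compl_Ici, measure_compl measurableSet_Ici (measure_ne_top μ _),
      measure_univ, hIci _ hz, hq_eq x hx]
  set L : ENNReal := ∫⁻ x in Set.Ioi (d / c), ENNReal.ofReal (q x) ∂μ with hLdef
  have hL_le : L ≤ μ (Set.Ioi (d / c)) := by
    rw [hLdef, ← setLIntegral_one]
    refine lintegral_mono_ae ?_
    refine (ae_restrict_iff' measurableSet_Ioi).2 (ae_of_all _ fun x hx => ?_)
    exact ENNReal.ofReal_le_one.mpr ((hq01 x hx).2)
  have key : ∫⁻ x, μ (Prod.mk x ⁻¹' S) ∂μ = 1 - L := by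
    have hsplit0 : ∫⁻ x, μ (Prod.mk x ⁻¹' S) ∂μ
        = ∫⁻ x in Set.Ioi 0, μ (Prod.mk x ⁻¹' S) ∂μ := by
      rw [← lintegral_add_compl (fun x => μ (Prod.mk x ⁻¹' S)) measurableSet_Ioi (μ := μ),
        Set.compl_Ioi, setLIntegral_measure_zero _ _ hIic0, add_zero]
    rw [hsplit0, ← Set.Ioc_union_Ioi_eq_Ioi hdc.le,
      lintegral_union measurableSet_Ioi (Set.Ioc_disjoint_Ioi le_rfl)]
    have h1 : ∫⁻ x in Set.Ioc 0 (d/c), μ (Prod.mk x ⁻¹' S) ∂μ = μ (Set.Ioc 0 (d/c)) := by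
      rw [setLIntegral_congr_fun_ae measurableSet_Ioc (ae_of_all _ hslice1), setLIntegral_one]
    have h2 : ∫⁻ x in Set.Ioi (d/c), μ (Prod.mk x ⁻¹' S) ∂μ = μ (Set.Ioi (d/c)) - L := by
      rw [setLIntegral_congr_fun_ae measurableSet_Ioi (ae_of_all _ hslice2),
        lintegral_sub hqm.ennreal_ofReal
          (ne_of_lt (lt_of_le_of_lt hL_le (measure_lt_top μ _)))
          ((ae_restrict_iff' measurableSet_Ioi).2 (ae_of_all _ fun x hx =>
            ENNReal.ofReal_le_one.mpr ((hq01 x hx).2))),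
        lintegral_one, Measure.restrict_apply_univ]
    have hLfin : L ≠ ⊤ := (hL_le.trans_lt (measure_lt_top μ _)).ne
    rw [h1, h2, ← (ENNReal.cancel_of_ne hLfin).add_tsub_assoc_of_le hL_le,
      ← measure_union (Set.Ioc_disjoint_Ioi le_rfl) measurableSet_Ioi,
      Set.Ioc_union_Ioi_eq_Ioi hdc.le, hIoi0]
  have hL1 : L ≤ 1 := hL_le.trans prob_le_one
  -- integrability of the pdf on the tail
  have hpdint : IntegrableOn (gammaPDFReal N 1) (Set.Ioi (d/c)) := by
    have h0 : IntegrableOn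
        (fun x : ℝ => x ^ ((N:ℝ)-1) * Real.exp (-x) / Real.Gamma N) (Set.Ioi (d/c)) :=
      ((gamma_integrand_integrableOn hNR).mono_set (Set.Ioi_subset_Ioi hdc.le)).div_const _
    refine h0.congr_fun (fun x hx => ?_) measurableSet_Ioi
    have hx0 : 0 < x := hdc.trans hx
    rw [gammaPDFReal, if_pos hx0.le, Real.one_rpow]
    simp only [one_mul]
    ring
  have hint2 : Integrable (fun x => gammaPDFReal N 1 x * q x)
      (volume.restrict (Set.Ioi (d/c))) := by
    refine Integrable.mono hpdint
      (((measurable_gammaPDFReal (N:ℝ) 1).mul hqm).aestronglyMeasurable) ?_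
    refine (ae_restrict_iff' measurableSet_Ioi).2 (ae_of_all _ fun x hx => ?_)
    rw [norm_mul]
    obtain ⟨hq0, hq1⟩ := hq01 x hx
    have h1 : ‖q x‖ ≤ 1 := by
      rw [Real.norm_eq_abs, abs_le]; constructor <;> linarith
    calc ‖gammaPDFReal N 1 x‖ * ‖q x‖ ≤ ‖gammaPDFReal N 1 x‖ * 1 :=
          mul_le_mul_of_nonneg_left h1 (norm_nonneg _)
      _ = ‖gammaPDFReal N 1 x‖ := mul_one _
  have hnn2 : 0 ≤ᵐ[volume.restrict (Set.Ioi (d/c))] fun x => gammaPDFReal N 1 x * q x := by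
    refine (ae_restrict_iff' measurableSet_Ioi).2 (ae_of_all _ fun x hx => ?_)
    exact mul_nonneg (gammaPDFReal_nonneg hNR one_pos x) (hq01 x hx).1
  have hpdfm : Measurable (gammaPDF (N:ℝ) 1) := (measurable_gammaPDFReal (N:ℝ) 1).ennreal_ofReal
  have hLcalc : L = ENNReal.ofReal (∫ x in Set.Ioi (d/c), gammaPDFReal N 1 x * q x) := by
    rw [hLdef, hμdef, gammaMeasure, restrict_withDensity measurableSet_Ioi,
      lintegral_withDensity_eq_lintegral_mul _ hpdfm hqm.ennreal_ofReal]
    refine Eq.trans (lintegral_congr fun x => ?_)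
      (ofReal_integral_eq_lintegral_ofReal hint2 hnn2).symm
    simp only [Pi.mul_apply, gammaPDF]
    rw [← ENNReal.ofReal_mul (gammaPDFReal_nonneg hNR one_pos x)]
  have hfinal : L.toReal = ∫ x in Set.Ioi (d / c),
      (upperGamma N ((a * x + b) / (c * x ^ 2 - d * x)) / Real.Gamma N) *
        (x ^ ((N : ℝ) - 1) * Real.exp (-x) / Real.Gamma N) := by
    rw [hLcalc, ENNReal.toReal_ofReal (integral_nonneg_of_ae hnn2)]
    refine setIntegral_congr_fun measurableSet_Ioi fun x hx => ?_
    have hx0 : 0 < x := hdc.trans hx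
    rw [hq_eq x hx, gammaPDFReal, if_pos hx0.le, Real.one_rpow]
    simp only [one_mul]
    ring
  rw [hP, hprod, key, ENNReal.toReal_sub_of_le hL1 ENNReal.one_ne_top, ENNReal.toReal_one,
    hfinal]
end

section
/- Let N ≥ 1 be an integer and let X and Y be independent random variables, each with the Gamma(N,1) distribution. Let a, c, d > 0 be real constants. Then Prob( Y·(c·X² − d·X) < a·X ) = 1 − (c^{−N} e^{−d/c} / Γ(N)) · Σ_{i=0}^{N−1} (a^i / i!) · Σ_{j=0}^{N−1} binom(N−1, j) · d^{N−j−1} · ∫_0^∞ t^{j−i} e^{−(a/t + t/c)} dt. -/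
open MeasureTheory ProbabilityTheory Filter
open Real Set Topology

lemma pow_le_factorial_mul_exp (n : ℕ) {u : ℝ} (hu : 0 ≤ u) :
    u ^ n ≤ n.factorial * Real.exp u := by
  have h1 : u ^ n / n.factorial ≤ ∑ i ∈ Finset.range (n + 1), u ^ i / i.factorial :=
    Finset.single_le_sum (f := fun i => u ^ i / i.factorial)
      (fun i _ => by positivity) (Finset.self_mem_range_succ n)
  have h2 := Real.sum_le_exp_of_nonneg hu (n + 1)
  have hf : (0:ℝ) < n.factorial := by positivity
  calc u ^ n = n.factorial * (u ^ n / n.factorial) := by field_simp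
  _ ≤ n.factorial * Real.exp u := by
      exact mul_le_mul_of_nonneg_left (h1.trans h2) hf.le

lemma hasDerivAt_tail (n : ℕ) (x : ℝ) :
    HasDerivAt (fun x : ℝ => -((n.factorial : ℝ) * (Real.exp (-x) *
        ∑ i ∈ Finset.range (n + 1), x ^ i / i.factorial)))
      (x ^ n * Real.exp (-x)) x := by
  have hP : HasDerivAt (fun x : ℝ => ∑ i ∈ Finset.range (n + 1), x ^ i / i.factorial)
      (∑ i ∈ Finset.range n, x ^ i / i.factorial) x := by
    have : HasDerivAt (fun x : ℝ => ∑ i ∈ Finset.range (n + 1), x ^ i / i.factorial)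
        (∑ i ∈ Finset.range (n + 1), (i : ℝ) * x ^ (i - 1) / i.factorial) x := by
      refine HasDerivAt.fun_sum fun i _ => ?_
      simpa [div_eq_mul_inv, mul_comm, mul_assoc, mul_left_comm] using
        ((hasDerivAt_pow i x).div_const (i.factorial : ℝ))
    convert this using 1
    rw [Finset.sum_range_succ']
    simp only [Nat.cast_zero, zero_mul, Nat.factorial_zero, Nat.cast_one, zero_div, add_zero]
    refine Finset.sum_congr rfl fun i _ => ?_
    rw [Nat.factorial_succ, Nat.add_sub_cancel]
    push_cast
    have : (i.factorial : ℝ) ≠ 0 := by positivity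
    field_simp
  have hE : HasDerivAt (fun x : ℝ => Real.exp (-x)) (-Real.exp (-x)) x := by
    have := (hasDerivAt_neg x).exp; rwa [mul_neg_one] at this
  have := ((hE.mul hP).const_mul (n.factorial : ℝ)).neg
  refine this.congr_deriv ?_
  have : ∑ i ∈ Finset.range (n + 1), x ^ i / i.factorial
      = (∑ i ∈ Finset.range n, x ^ i / i.factorial) + x ^ n / n.factorial := by
    rw [Finset.sum_range_succ]
  rw [this]
  have hf : (n.factorial : ℝ) ≠ 0 := by positivity
  field_simp
  ring

lemma integrableOn_pow_mul_exp_neg (n : ℕ) {y : ℝ} (hy : 0 ≤ y) :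
    IntegrableOn (fun x : ℝ => x ^ n * Real.exp (-x)) (Ioi y) := by
  have h := Real.GammaIntegral_convergent (s := (n + 1 : ℝ)) (by positivity)
  have h2 : IntegrableOn (fun x : ℝ => Real.exp (-x) * x ^ ((n + 1 : ℝ) - 1)) (Ioi y) :=
    h.mono_set (Ioi_subset_Ioi hy)
  refine h2.congr_fun (fun x hx => ?_) measurableSet_Ioi
  have hx0 : (0:ℝ) < x := lt_of_le_of_lt hy hx
  beta_reduce
  rw [show ((n:ℝ) + 1 - 1) = (n : ℝ) by ring, Real.rpow_natCast, mul_comm]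

lemma tail_integral (n : ℕ) {y : ℝ} (hy : 0 ≤ y) :
    ∫ x in Ioi y, x ^ n * Real.exp (-x) =
      (n.factorial : ℝ) * Real.exp (-y) * ∑ i ∈ Finset.range (n + 1), y ^ i / i.factorial := by
  have := integral_Ioi_of_hasDerivAt_of_tendsto' (f' := fun x => x ^ n * Real.exp (-x))
    (fun x _ => hasDerivAt_tail n x) (integrableOn_pow_mul_exp_neg n hy) (m := 0) ?_
  · rw [this]; ring
  · have : Tendsto (fun x : ℝ => ∑ i ∈ Finset.range (n + 1),
        -((n.factorial : ℝ) * (x ^ i * Real.exp (-x) / i.factorial))) atTop (𝓝 0) := by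
      have := tendsto_finset_sum (Finset.range (n + 1)) (fun i _ =>
        (((tendsto_pow_mul_exp_neg_atTop_nhds_zero i).div_const (i.factorial:ℝ)).const_mul
          ((n.factorial : ℝ))).neg)
      simpa using this
    refine this.congr fun x => ?_
    simp only [Finset.mul_sum, ← Finset.sum_neg_distrib]
    exact Finset.sum_congr rfl fun i _ => by ring

open ProbabilityTheory in
lemma gammaMeasure_Iic_zero (N : ℕ) : gammaMeasure N 1 (Iic 0) = 0 := by
  rw [gammaMeasure, withDensity_apply _ measurableSet_Iic]
  have h : (Iic (0:ℝ)) = Iio 0 ∪ {0} := by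
    ext x; simp [le_iff_lt_or_eq]
  rw [h, lintegral_union (measurableSet_singleton 0) (by simp only [Set.disjoint_left, mem_Iio, mem_singleton_iff]; exact fun a ha => ha.ne),
    lintegral_gammaPDF_of_nonpos le_rfl, setLIntegral_measure_zero _ _ (by simp), zero_add]

open ProbabilityTheory in
lemma gammaMeasure_Ici (N : ℕ) (hN : 1 ≤ N) {u : ℝ} (hu : 0 < u) :
    gammaMeasure N 1 (Ici u) =
      ENNReal.ofReal (Real.exp (-u) * ∑ i ∈ Finset.range N, u ^ i / i.factorial) := by
  have hΓ : Real.Gamma N = (N - 1).factorial := by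
    rw [show ((N:ℝ)) = ((N - 1 : ℕ) : ℝ) + 1 by
      push_cast [Nat.cast_sub hN]; ring]
    exact Real.Gamma_nat_eq_factorial (N - 1)
  have hΓpos : (0:ℝ) < Real.Gamma N := by
    rw [hΓ]; positivity
  set f : ℝ → ℝ := fun x => (Real.Gamma N)⁻¹ * (x ^ (N - 1) * Real.exp (-x)) with hf
  have hfi : IntegrableOn f (Ici u) := by
    have h2 : IntegrableOn f (Ioi u) :=
      (integrableOn_pow_mul_exp_neg (N - 1) (y := u) hu.le).const_mul (Real.Gamma N)⁻¹
    exact Iff.mpr integrableOn_Ici_iff_integrableOn_Ioi h2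
  rw [gammaMeasure, withDensity_apply _ measurableSet_Ici]
  have hcong : ∫⁻ x in Ici u, gammaPDF N 1 x = ∫⁻ x in Ici u, ENNReal.ofReal (f x) := by
    refine setLIntegral_congr_fun measurableSet_Ici (fun x hx => ?_)
    have hx0 : (0:ℝ) < x := lt_of_lt_of_le hu hx
    rw [gammaPDF_of_nonneg hx0.le]
    congr 1
    rw [hf]
    simp only [Real.one_rpow, one_mul, neg_mul]
    rw [show ((N:ℝ) - 1) = ((N - 1 : ℕ) : ℝ) by push_cast [Nat.cast_sub hN]; ring,
      Real.rpow_natCast]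
    ring
  rw [hcong, ← ofReal_integral_eq_lintegral_ofReal hfi
    ((ae_restrict_iff' measurableSet_Ici).mpr (ae_of_all _ fun x hx =>
      mul_nonneg (inv_nonneg.2 hΓpos.le)
        (mul_nonneg (pow_nonneg ((hu.trans_le hx).le) _) (Real.exp_nonneg _))))]
  congr 1
  rw [hf]
  simp only []
  rw [integral_Ici_eq_integral_Ioi, MeasureTheory.integral_const_mul, tail_integral (N - 1) hu.le, hΓ]
  have h1 : ((N - 1 : ℕ).factorial : ℝ) ≠ 0 := by positivity
  rw [show (N - 1) + 1 = N from Nat.succ_pred_eq_of_pos hN]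
  field_simp

lemma continuousOn_rpow_exp_aux (q A C : ℝ) :
    ContinuousOn (fun t : ℝ => t ^ q * Real.exp (-(A / t + t / C))) (Ioi 0) := by
  apply ContinuousOn.mul
  · exact fun x hx => (continuousAt_rpow_const x q (Or.inl (ne_of_gt hx))).continuousWithinAt
  · exact (((continuousOn_const.div continuousOn_id fun x hx => ne_of_gt hx).add
      (continuousOn_id.div_const C)).neg).rexp

lemma integrableOn_rpow_exp_aux {q A C : ℝ} (hA : 0 < A) (hC : 0 < C) :
    IntegrableOn (fun t : ℝ => t ^ q * Real.exp (-(A / t + t / C))) (Ioi 0) := by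
  set f : ℝ → ℝ := fun t => t ^ q * Real.exp (-(A / t + t / C)) with hfdef
  have hmeas : ∀ s ⊆ Ioi (0:ℝ), MeasurableSet s → AEStronglyMeasurable f (volume.restrict s) :=
    fun s hs hsm => ((continuousOn_rpow_exp_aux q A C).mono hs).aestronglyMeasurable hsm
  have hnonneg : ∀ t : ℝ, 0 < t → 0 ≤ f t := fun t ht =>
    mul_nonneg (Real.rpow_nonneg ht.le q) (Real.exp_nonneg _)
  rw [show Ioi (0:ℝ) = Ioc 0 1 ∪ Ioi 1 from (Ioc_union_Ioi_eq_Ioi zero_le_one).symm]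
  refine IntegrableOn.union ?_ ?_
  · -- on Ioc 0 1, bounded by a constant
    set n : ℕ := ⌈-q⌉₊ with hn
    have hApow : (0:ℝ) < A ^ n := by positivity
    refine Integrable.mono' (g := fun _ => (n.factorial : ℝ) / A ^ n)
      (integrableOn_const measure_Ioc_lt_top.ne)
      (hmeas _ Ioc_subset_Ioi_self measurableSet_Ioc) ?_
    rw [ae_restrict_iff' measurableSet_Ioc]
    refine ae_of_all _ fun t ht => ?_
    rw [Real.norm_of_nonneg (hnonneg t ht.1)]
    have hu : 0 < A / t := div_pos hA ht.1
    have key : (A / t) ^ n * Real.exp (-(A / t)) ≤ (n.factorial : ℝ) := by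
      calc (A / t) ^ n * Real.exp (-(A / t))
          ≤ (n.factorial : ℝ) * Real.exp (A / t) * Real.exp (-(A / t)) :=
            mul_le_mul_of_nonneg_right (pow_le_factorial_mul_exp n hu.le) (Real.exp_nonneg _)
        _ = (n.factorial : ℝ) := by
            rw [mul_assoc, ← Real.exp_add, add_neg_cancel, Real.exp_zero, mul_one]
    have h1 : t ^ q ≤ t ^ (-(n:ℝ)) := by
      apply Real.rpow_le_rpow_of_exponent_ge ht.1 ht.2
      have := Nat.le_ceil (-q)
      rw [hn]; linarith
    have h2 : t ^ (-(n:ℝ)) = (t ^ n)⁻¹ := by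
      rw [Real.rpow_neg ht.1.le, Real.rpow_natCast]
    have h3 : Real.exp (-(A / t + t / C)) ≤ Real.exp (-(A / t)) := by
      apply Real.exp_le_exp.mpr
      have : 0 ≤ t / C := div_nonneg ht.1.le hC.le
      linarith
    calc f t ≤ t ^ (-(n:ℝ)) * Real.exp (-(A / t)) :=
          mul_le_mul h1 h3 (Real.exp_nonneg _) (Real.rpow_nonneg ht.1.le _)
      _ = (A / t) ^ n * Real.exp (-(A / t)) / A ^ n := by
          rw [h2, div_pow]
          have ht0 : t ^ n ≠ 0 := pow_ne_zero n ht.1.ne'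
          field_simp
      _ ≤ (n.factorial : ℝ) / A ^ n := (div_le_div_iff_of_pos_right hApow).mpr key
  · -- on Ioi 1, bounded by decaying exponential
    set m : ℕ := ⌈q⌉₊ with hm
    have h2C : (0:ℝ) < 2 * C := by positivity
    have hinv : (0:ℝ) < (2 * C)⁻¹ := by positivity
    have hgint : IntegrableOn
        (fun t : ℝ => ((m.factorial : ℝ) * (2 * C) ^ m) * Real.exp (-(2 * C)⁻¹ * t))
        (Ioi 1) := (exp_neg_integrableOn_Ioi 1 hinv).const_mul _
    refine Integrable.mono' hgint
      (hmeas _ (Ioi_subset_Ioi zero_le_one) measurableSet_Ioi) ?_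
    rw [ae_restrict_iff' measurableSet_Ioi]
    refine ae_of_all _ fun t (ht : 1 < t) => ?_
    have ht0 : (0:ℝ) < t := zero_lt_one.trans ht
    rw [Real.norm_of_nonneg (hnonneg t ht0)]
    have h1 : t ^ q ≤ t ^ (m:ℝ) := Real.rpow_le_rpow_of_exponent_le ht.le (Nat.le_ceil q)
    have h2 : t ^ (m:ℝ) = t ^ m := Real.rpow_natCast t m
    have h3 : t ^ m ≤ (m.factorial : ℝ) * (2 * C) ^ m * Real.exp (t / (2 * C)) := by
      have := pow_le_factorial_mul_exp m (u := t / (2 * C)) (by positivity)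
      rw [div_pow] at this
      have h2Cpow : (0:ℝ) < (2 * C) ^ m := by positivity
      calc t ^ m = t ^ m / (2 * C) ^ m * (2 * C) ^ m := by field_simp
        _ ≤ (m.factorial : ℝ) * Real.exp (t / (2 * C)) * (2 * C) ^ m :=
            mul_le_mul_of_nonneg_right this h2Cpow.le
        _ = (m.factorial : ℝ) * (2 * C) ^ m * Real.exp (t / (2 * C)) := by ring
    have h4 : Real.exp (-(A / t + t / C)) ≤ Real.exp (-(t / C)) := by
      apply Real.exp_le_exp.mpr
      have : 0 ≤ A / t := div_nonneg hA.le ht0.le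
      linarith
    calc f t ≤ t ^ m * Real.exp (-(t / C)) := by
          refine mul_le_mul (h1.trans_eq h2) h4 (Real.exp_nonneg _) (by positivity)
      _ ≤ (m.factorial : ℝ) * (2 * C) ^ m * Real.exp (t / (2 * C)) * Real.exp (-(t / C)) :=
          mul_le_mul_of_nonneg_right h3 (Real.exp_nonneg _)
      _ = (m.factorial : ℝ) * (2 * C) ^ m * Real.exp (-(2 * C)⁻¹ * t) := by
          rw [mul_assoc, ← Real.exp_add]
          congr 2
          field_simp
          ring

lemma integral_comp_add_right_Ioi (g : ℝ → ℝ) (a b : ℝ) :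
    ∫ x in Ioi a, g (x + b) = ∫ x in Ioi (a + b), g x := by
  have key : ∀ x : ℝ, (Ioi a).indicator (fun y => g (y + b)) x
      = (Ioi (a + b)).indicator g (x + b) := by
    intro x
    by_cases h : a < x
    · rw [Set.indicator_of_mem (show x ∈ Ioi a from h),
        Set.indicator_of_mem (show x + b ∈ Ioi (a + b) by simpa using h)]
    · rw [Set.indicator_of_notMem (show x ∉ Ioi a from h),
        Set.indicator_of_notMem (show x + b ∉ Ioi (a + b) by simpa using h)]
  rw [← integral_indicator measurableSet_Ioi, ← integral_indicator measurableSet_Ioi]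
  calc ∫ x, (Ioi a).indicator (fun y => g (y + b)) x
      = ∫ x, (Ioi (a + b)).indicator g (x + b) := by simp_rw [key]
    _ = ∫ x, (Ioi (a + b)).indicator g x :=
        integral_add_right_eq_self ((Ioi (a + b)).indicator g) b

open ProbabilityTheory in
lemma lemB (N : ℕ) (hN : 1 ≤ N) (a c d : ℝ) (ha : 0 < a) (hc : 0 < c) (hd : 0 < d) :
    ∫ x in Ioi (d / c), gammaPDFReal N 1 x *
        (Real.exp (-(a / (c * x - d))) *
          ∑ i ∈ Finset.range N, (a / (c * x - d)) ^ i / i.factorial) =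
    ((c ^ N)⁻¹ * Real.exp (-(d / c)) / Real.Gamma N) *
      ∑ i ∈ Finset.range N, (a ^ i / (Nat.factorial i)) *
        ∑ j ∈ Finset.range N, (Nat.choose (N - 1) j : ℝ) * d ^ (N - j - 1) *
          ∫ t in Set.Ioi (0 : ℝ),
            t ^ ((j : ℝ) - (i : ℝ)) * Real.exp (-(a / t + t / c)) := by
  set φ : ℝ → ℝ := fun x => gammaPDFReal N 1 x *
      (Real.exp (-(a / (c * x - d))) *
        ∑ i ∈ Finset.range N, (a / (c * x - d)) ^ i / i.factorial) with hφ
  have step1 : ∫ x in Ioi (d / c), φ x = ∫ x in Ioi 0, φ (x + d / c) := by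
    rw [integral_comp_add_right_Ioi φ 0 (d / c), zero_add]
  have step2 : ∫ x in Ioi (0:ℝ), φ (x + d / c)
      = c⁻¹ * ∫ t in Ioi (0:ℝ), φ (c⁻¹ * t + d / c) := by
    have h := integral_comp_mul_left_Ioi (fun u => φ (u + d / c)) 0 (inv_pos.mpr hc)
    rw [mul_zero, inv_inv, smul_eq_mul] at h
    rw [h]
    rw [← mul_assoc, inv_mul_cancel₀ hc.ne', one_mul]
  have hpt : ∀ t ∈ Ioi (0:ℝ), φ (c⁻¹ * t + d / c) =
      ∑ i ∈ Finset.range N, ∑ j ∈ Finset.range N,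
        ((c ^ (N - 1))⁻¹ * Real.exp (-(d / c)) / Real.Gamma N * (a ^ i / i.factorial) *
          ((Nat.choose (N - 1) j : ℝ) * d ^ (N - j - 1))) *
        (t ^ ((j : ℝ) - (i : ℝ)) * Real.exp (-(a / t + t / c))) := by
    intro t ht
    have ht0 : (0:ℝ) < t := ht
    have hx : (0:ℝ) < c⁻¹ * t + d / c := by positivity
    have hcx : c * (c⁻¹ * t + d / c) - d = t := by field_simp; ring
    rw [hφ]
    simp only [gammaPDFReal, if_pos hx.le, hcx, Real.one_rpow, one_mul]
    rw [show ((N:ℝ) - 1) = ((N - 1 : ℕ) : ℝ) by push_cast [Nat.cast_sub hN]; ring,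
      Real.rpow_natCast,
      show c⁻¹ * t + d / c = (t + d) / c by field_simp,
      div_pow,
      show -((t + d) / c) = -(t / c) + -(d / c) by ring,
      Real.exp_add,
      add_pow,
      show N - 1 + 1 = N from Nat.succ_pred_eq_of_pos hN]
    have harr : 1 / Real.Gamma N *
          ((∑ k ∈ Finset.range N, t ^ k * d ^ (N - 1 - k) * ((N-1).choose k : ℝ)) / c ^ (N - 1)) *
          (Real.exp (-(t / c)) * Real.exp (-(d / c))) *
        (Real.exp (-(a / t)) *
          ∑ i ∈ Finset.range N, (a / t) ^ i / i.factorial) =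
        ((∑ k ∈ Finset.range N, t ^ k * d ^ (N - 1 - k) * ((N-1).choose k : ℝ)) *
          (∑ i ∈ Finset.range N, (a / t) ^ i / i.factorial)) *
        (1 / Real.Gamma N * (c ^ (N - 1))⁻¹ * Real.exp (-(t / c)) * Real.exp (-(d / c)) *
          Real.exp (-(a / t))) := by
      ring
    rw [harr, Finset.sum_mul_sum, Finset.sum_mul]
    rw [Finset.sum_comm]
    refine Finset.sum_congr rfl fun i hi => ?_
    rw [Finset.sum_mul]
    refine Finset.sum_congr rfl fun j hj => ?_
    rw [show N - 1 - i = N - i - 1 by omega,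
      Real.rpow_sub ht0, Real.rpow_natCast, Real.rpow_natCast,
      show -(a / t + t / c) = -(a / t) + -(t / c) by ring, Real.exp_add,
      div_pow]
    have hfact : (j.factorial : ℝ) ≠ 0 := by positivity
    have hGamma : Real.Gamma N ≠ 0 := by
      have : (0:ℝ) < Real.Gamma N := Real.Gamma_pos_of_pos (by exact_mod_cast hN)
      exact this.ne'
    field_simp
  have hint : ∀ i j : ℕ, IntegrableOn
      (fun t : ℝ => ((c ^ (N - 1))⁻¹ * Real.exp (-(d / c)) / Real.Gamma N *
          (a ^ i / i.factorial) * ((Nat.choose (N - 1) j : ℝ) * d ^ (N - j - 1))) *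
        (t ^ ((j : ℝ) - (i : ℝ)) * Real.exp (-(a / t + t / c)))) (Ioi 0) :=
    fun i j => (integrableOn_rpow_exp_aux (q := (j:ℝ) - (i:ℝ)) ha hc).const_mul _
  rw [step1, step2, setIntegral_congr_fun measurableSet_Ioi hpt,
    integral_finset_sum _ (fun i _ => integrable_finset_sum _ (fun j _ => hint i j))]
  rw [Finset.mul_sum, Finset.mul_sum]
  refine Finset.sum_congr rfl fun i _ => ?_
  rw [integral_finset_sum _ (fun j _ => hint i j), Finset.mul_sum, Finset.mul_sum,
    Finset.mul_sum]
  refine Finset.sum_congr rfl fun j _ => ?_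
  rw [MeasureTheory.integral_const_mul]
  have hpow : (c:ℝ) ^ N = c * c ^ (N - 1) := by
    conv_lhs => rw [show N = N - 1 + 1 from (Nat.succ_pred_eq_of_pos hN).symm]
    rw [pow_succ']
  rw [hpow]
  ring


/-- **Corollary 1** (outage-probability lower bound of the noise-limited system, integral form):
if `X, Y` are independent `Gamma(N,1)` random variables and `a, c, d > 0`, then
`Prob(Y (c X² − d X) < a X) = 1 − (c^{−N} e^{−d/c}/Γ(N)) Σ_{i=0}^{N−1} (a^i/i!)
Σ_{j=0}^{N−1} C(N−1,j) d^{N−j−1} ∫_0^∞ t^{j−i} e^{−(a/t + t/c)} dt`. -/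
theorem outage_noise_limited_lower_bound
    {Ω : Type*} [MeasureSpace Ω] [IsProbabilityMeasure (ℙ : Measure Ω)]
    (N : ℕ) (hN : 1 ≤ N) (X Y : Ω → ℝ)
    (hXY : IndepFun X Y ℙ)
    (hX : Measure.map X ℙ = gammaMeasure N 1)
    (hY : Measure.map Y ℙ = gammaMeasure N 1)
    (a c d : ℝ) (ha : 0 < a) (hc : 0 < c) (hd : 0 < d) :
    (ℙ {ω | Y ω * (c * X ω ^ 2 - d * X ω) < a * X ω}).toReal =
      1 - ((c ^ N)⁻¹ * Real.exp (-(d / c)) / Real.Gamma N) *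
        ∑ i ∈ Finset.range N, (a ^ i / (Nat.factorial i)) *
          ∑ j ∈ Finset.range N, (Nat.choose (N - 1) j : ℝ) * d ^ (N - j - 1) *
            ∫ t in Set.Ioi (0 : ℝ),
              t ^ ((j : ℝ) - (i : ℝ)) * Real.exp (-(a / t + t / c)) := by
  have hNpos : (0:ℝ) < N := by exact_mod_cast hN
  set γ : Measure ℝ := gammaMeasure N 1 with hγ
  haveI hγP : IsProbabilityMeasure γ := isProbabilityMeasure_gammaMeasure hNpos one_pos
  have hXm : AEMeasurable X ℙ := by
    by_contra h
    rw [Measure.map_of_not_aemeasurable h] at hX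
    have h1 := hγP.measure_univ
    rw [← hX] at h1
    simp at h1
  have hYm : AEMeasurable Y ℙ := by
    by_contra h
    rw [Measure.map_of_not_aemeasurable h] at hY
    have h1 := hγP.measure_univ
    rw [← hY] at h1
    simp at h1
  have hpair : Measure.map (fun ω => (X ω, Y ω)) ℙ = γ.prod γ := by
    rw [(indepFun_iff_map_prod_eq_prod_map_map hXm hYm).mp hXY, hX, hY]
  set S : Set (ℝ × ℝ) := {p : ℝ × ℝ | a * p.1 ≤ p.2 * (c * p.1 ^ 2 - d * p.1)} with hS
  have hSm : MeasurableSet S := by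
    apply measurableSet_le
    · exact measurable_const.mul measurable_fst
    · exact measurable_snd.mul
        ((measurable_const.mul (measurable_fst.pow_const 2)).sub
          (measurable_const.mul measurable_fst))
  have hEv : {ω | Y ω * (c * X ω ^ 2 - d * X ω) < a * X ω}
      = (fun ω => (X ω, Y ω)) ⁻¹' Sᶜ := by
    ext ω
    simp [hS, not_le]
  haveI : IsProbabilityMeasure (γ.prod γ) := by infer_instance
  rw [hEv, ← Measure.map_apply_of_aemeasurable (hXm.prodMk hYm) hSm.compl, hpair,
    prob_compl_eq_one_sub hSm,
    ENNReal.toReal_sub_of_le prob_le_one ENNReal.one_ne_top, ENNReal.toReal_one]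
  congr 1
  -- compute ((γ.prod γ) S).toReal
  have hprod : (γ.prod γ) S = ∫⁻ x, γ (Prod.mk x ⁻¹' S) ∂γ := Measure.prod_apply hSm
  have hae : ∀ᵐ x ∂γ, 0 < x := by
    rw [ae_iff]
    refine measure_mono_null (fun x hx => ?_) (gammaMeasure_Iic_zero N)
    simp only [not_lt, mem_setOf_eq] at hx
    exact hx
  set T : ℝ → ℝ := fun x => Real.exp (-(a / (c * x - d))) *
      ∑ i ∈ Finset.range N, (a / (c * x - d)) ^ i / i.factorial with hT
  have hker : ∀ᵐ x ∂γ, γ (Prod.mk x ⁻¹' S)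
      = (Ioi (d / c)).indicator (fun x => ENNReal.ofReal (T x)) x := by
    filter_upwards [hae] with x hx
    by_cases hxd : d / c < x
    · have hk : 0 < c * x - d := by
        have := (div_lt_iff₀ hc).mp hxd
        linarith
      have hset : Prod.mk x ⁻¹' S = Ici (a / (c * x - d)) := by
        ext y
        simp only [hS, mem_preimage, mem_setOf_eq, mem_Ici]
        rw [show y * (c * x ^ 2 - d * x) = (y * (c * x - d)) * x by ring,
          show a * x = a * x by rfl]
        constructor
        · intro h
          rw [div_le_iff₀ hk]
          exact le_of_mul_le_mul_right (by linarith [h]) hx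
        · intro h
          have h2 : a ≤ y * (c * x - d) := (div_le_iff₀ hk).mp h
          nlinarith
      rw [hset, hγ, gammaMeasure_Ici N hN (div_pos ha hk),
        Set.indicator_of_mem (mem_Ioi.mpr hxd), hT]
    · have hk : c * x - d ≤ 0 := by
        have := (le_div_iff₀ hc).mp (not_lt.mp hxd)
        linarith
      have hsub : Prod.mk x ⁻¹' S ⊆ Iic 0 := by
        intro y hy
        simp only [hS, mem_preimage, mem_setOf_eq] at hy
        by_contra h0
        simp only [mem_Iic, not_le] at h0
        have hx2 : x * (c * x - d) ≤ 0 := by nlinarith [mul_nonneg hx.le (neg_nonneg.mpr hk)]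
        have h1 : y * (c * x ^ 2 - d * x) ≤ 0 := by
          nlinarith [mul_nonneg h0.le (neg_nonneg.mpr hx2)]
        have h2 : 0 < a * x := mul_pos ha hx
        linarith
      rw [hγ, measure_mono_null hsub (gammaMeasure_Iic_zero N)]
      exact (Set.indicator_of_notMem (show x ∉ Ioi (d / c) from hxd) _).symm
  have hTmeas : Measurable T := by
    have hsub : Measurable fun x : ℝ => a / (c * x - d) :=
      measurable_const.div ((measurable_const.mul measurable_id).sub measurable_const)
    exact (hsub.neg.exp).mul
      (Finset.measurable_sum _ fun i _ => (hsub.pow_const i).div_const _)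
  rw [hprod, lintegral_congr_ae hker, lintegral_indicator measurableSet_Ioi _, hγ,
    gammaMeasure,
    setLIntegral_withDensity_eq_setLIntegral_mul volume
      (show Measurable (gammaPDF N 1) from (measurable_gammaPDFReal N 1).ennreal_ofReal)
      (hTmeas.ennreal_ofReal) measurableSet_Ioi]
  have hcong2 : ∫⁻ x in Ioi (d / c), gammaPDF N 1 x * ENNReal.ofReal (T x)
      = ∫⁻ x in Ioi (d / c), ENNReal.ofReal (gammaPDFReal N 1 x * T x) := by
    refine setLIntegral_congr_fun measurableSet_Ioi (fun x hx => ?_)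
    rw [gammaPDF, ← ENNReal.ofReal_mul (gammaPDFReal_nonneg hNpos one_pos x)]
  simp only [Pi.mul_apply]
  rw [hcong2]
  have hnn : 0 ≤ᵐ[volume.restrict (Ioi (d / c))] fun x => gammaPDFReal N 1 x * T x := by
    rw [EventuallyLE, ae_restrict_iff' measurableSet_Ioi]
    refine ae_of_all _ fun x hx => ?_
    simp only [Pi.zero_apply]
    have hk : 0 < c * x - d := by
      have := (div_lt_iff₀ hc).mp (mem_Ioi.mp hx)
      linarith
    have hu : 0 ≤ a / (c * x - d) := (div_pos ha hk).le
    exact mul_nonneg (gammaPDFReal_nonneg hNpos one_pos x)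
      (mul_nonneg (Real.exp_nonneg _)
        (Finset.sum_nonneg fun i _ => div_nonneg (pow_nonneg hu i) (by positivity)))
  have hsm : AEStronglyMeasurable (fun x => gammaPDFReal N 1 x * T x)
      (volume.restrict (Ioi (d / c))) :=
    ((measurable_gammaPDFReal N 1).mul hTmeas).aestronglyMeasurable
  rw [← integral_eq_lintegral_of_nonneg_ae hnn hsm]
  exact lemB N hN a c d ha hc hd
end

section
/- Let N ≥ 1 be an integer and let X and Y be independent random variables each with the Gamma(N,1) distribution. Fix θ ∈ (0,1) and η, d₁, d₂, γ > 0. Then lim_{ρ→∞} (ρ^N / ln ρ) · Prob( min( (1−θ)·ρ·X/d₁ , (η·θ·ρ/(d₁·d₂))·X·Y ) < γ ) = (d₁·d₂·γ/(η·θ))^N / (Γ(N)·Γ(N+1)). In particular the outage probability of the SNR upper bound decays like ρ^{−N}·ln ρ, so the system achieves diversity order N. -/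
/-!
The outage event is `{X < s} ∪ {XY < t}` with `s = s₀/ρ`, `s₀ = γd₁/(1-θ)`, and `t = t₀/ρ`,
`t₀ = d₁d₂γ/(ηθ)`. For `u ≥ 0` the Gamma(a,1) distribution function satisfies
`u^a e^{-u}/Γ(a+1) ≤ P(X < u) ≤ u^a/Γ(a+1)`. Conditioning on `X = x`, the event `XY < t` has
probability about `(t/x)^a/Γ(a+1)`, and against the density `x^{a-1}e^{-x}/Γ(a)` this is
`t^a/(Γ(a)Γ(a+1)) · e^{-x}/x`. Integrating over `x ≥ s` gives at most
`t^a/(Γ(a)Γ(a+1)) · (1 - log s)`, while `{X < s}` only costs `O(s^a) = O(ρ^{-a})`.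
For the matching lower bound integrate over `x ∈ [t/ε, ε]` with `ε = 1/log ρ`: there
`e^{-x-t/x} ≥ e^{-2ε} → 1`, and `∫ dx/x = log(ε²/t) ~ log ρ`.
-/

open MeasureTheory ProbabilityTheory Filter Real Set
open scoped ENNReal Topology

lemma lintegral_Icc_inv {p q : ℝ} (hp : 0 < p) (hpq : p ≤ q) :
    ∫⁻ x in Icc p q, ENNReal.ofReal x⁻¹ = ENNReal.ofReal (log (q / p)) := by
  have hcont : ContinuousOn (fun x : ℝ => x⁻¹) (Icc p q) :=
    continuousOn_inv₀.mono fun x hx => (hp.trans_le hx.1).ne'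
  rw [← ofReal_integral_eq_lintegral_ofReal hcont.integrableOn_Icc
    ((ae_restrict_iff' measurableSet_Icc).2 (ae_of_all _ fun x hx => by
      have := hp.trans_le hx.1; positivity)),
    integral_Icc_eq_integral_Ioc, ← intervalIntegral.integral_of_le hpq,
    integral_inv_of_pos hp (hp.trans_le hpq)]

lemma lintegral_Ici_exp_neg_mul_inv_le {c : ℝ} (hc0 : 0 < c) (hc1 : c ≤ 1) :
    ∫⁻ x in Ici c, ENNReal.ofReal (exp (-x) * x⁻¹) ≤ ENNReal.ofReal (1 - log c) := by
  have hsplit : Ici c ⊆ Icc c 1 ∪ Ici 1 := fun x hx => by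
    rcases le_total x 1 with h | h
    exacts [Or.inl ⟨hx, h⟩, Or.inr h]
  calc ∫⁻ x in Ici c, ENNReal.ofReal (exp (-x) * x⁻¹)
      ≤ (∫⁻ x in Icc c 1, ENNReal.ofReal (exp (-x) * x⁻¹))
        + ∫⁻ x in Ici 1, ENNReal.ofReal (exp (-x) * x⁻¹) :=
        (lintegral_mono_set hsplit).trans (lintegral_union_le _ (Icc c 1) (Ici 1))
    _ ≤ (∫⁻ x in Icc c 1, ENNReal.ofReal x⁻¹)
          + ∫⁻ x in Ici 1, ENNReal.ofReal (exp (-x)) := by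
        refine add_le_add
          (setLIntegral_mono' measurableSet_Icc fun x hx => ENNReal.ofReal_le_ofReal ?_)
          (setLIntegral_mono' measurableSet_Ici fun x hx => ENNReal.ofReal_le_ofReal ?_)
        · have := hc0.trans_le hx.1
          exact mul_le_of_le_one_left (by positivity) (exp_le_one_iff.2 (by linarith))
        · exact mul_le_of_le_one_right (exp_nonneg _) (inv_le_one_of_one_le₀ hx)
    _ = ENNReal.ofReal (-log c) + ENNReal.ofReal (exp (-1)) := by
        have hint : IntegrableOn (fun x : ℝ => exp (-x)) (Ioi 1) := by
          simpa using exp_neg_integrableOn_Ioi 1 one_pos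
        rw [lintegral_Icc_inv hc0 hc1, one_div, log_inv, ← integral_exp_neg_Ioi,
          ofReal_integral_eq_lintegral_ofReal hint (ae_of_all _ fun x => exp_nonneg _),
          Measure.restrict_congr_set Ioi_ae_eq_Ici]
    _ ≤ ENNReal.ofReal (1 - log c) := by
        rw [← ENNReal.ofReal_add (neg_nonneg.2 (log_nonpos hc0.le hc1)) (exp_nonneg _)]
        have : exp (-1) ≤ 1 := exp_le_one_iff.2 (by norm_num)
        exact ENNReal.ofReal_le_ofReal (by linarith)

def outageRegion (s t : ℝ) : Set (ℝ × ℝ) := {p | p.1 < s ∨ p.1 * p.2 < t}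

lemma measurableSet_outageRegion (s t : ℝ) : MeasurableSet (outageRegion s t) :=
  (measurableSet_lt measurable_fst measurable_const).union
    (measurableSet_lt (measurable_fst.mul measurable_snd) measurable_const)

lemma preimage_outageRegion_of_le {s t x : ℝ} (hx : 0 < x) (hsx : s ≤ x) :
    Prod.mk x ⁻¹' outageRegion s t = Iio (t / x) := by
  ext y
  simp only [outageRegion, mem_preimage, mem_ofPred_eq, mem_Iio, lt_div_iff₀' hx]
  exact or_iff_right hsx.not_gt

lemma prod_outageRegion_le (μ ν : Measure ℝ) [IsProbabilityMeasure ν] {s : ℝ} (hs : 0 < s)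
    (t : ℝ) :
    μ.prod ν (outageRegion s t) ≤ μ (Iio s) + ∫⁻ x in Ici s, ν (Iio (t / x)) ∂μ := by
  rw [Measure.prod_apply (measurableSet_outageRegion s t),
    ← lintegral_add_compl _ measurableSet_Iio, compl_Iio,
    setLIntegral_congr_fun measurableSet_Ici fun x hx =>
      congrArg ν (preimage_outageRegion_of_le (hs.trans_le hx) hx)]
  gcongr
  exact (setLIntegral_mono' measurableSet_Iio fun x _ => prob_le_one).trans_eq
    (setLIntegral_one _)

lemma lintegral_Ioi_le_prod_outageRegion (μ ν : Measure ℝ) [SFinite ν] (s t : ℝ) :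
    ∫⁻ x in Ioi 0, ν (Iio (t / x)) ∂μ ≤ μ.prod ν (outageRegion s t) := by
  rw [Measure.prod_apply (measurableSet_outageRegion s t)]
  refine (setLIntegral_mono' measurableSet_Ioi fun x hx => measure_mono fun y hy => ?_).trans
    (setLIntegral_le_lintegral _ _)
  exact Or.inr ((lt_div_iff₀' hx).1 hy)

section GammaShape

variable {a : ℝ}

lemma gammaMeasure_one_eq :
    gammaMeasure a 1 = (volume.restrict (Ioi 0)).withDensity
      fun x => ENNReal.ofReal (x ^ (a - 1) * exp (-x) / Gamma a) := by
  rw [gammaMeasure, ← withDensity_indicator measurableSet_Ioi]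
  refine withDensity_congr_ae ?_
  filter_upwards [Measure.ae_ne volume 0] with x hx
  rcases hx.lt_or_gt with hx | hx
  · rw [gammaPDF_of_neg hx, indicator_of_notMem (notMem_Ioi.2 hx.le)]
  · rw [gammaPDF_of_nonneg hx.le, indicator_of_mem (mem_Ioi.2 hx)]
    simp only [one_rpow, one_mul]
    ring_nf

lemma setLIntegral_gammaMeasure_one {s : Set ℝ} (hs : MeasurableSet s) (hs0 : s ⊆ Ioi 0)
    {g : ℝ → ℝ≥0∞} (hg : Measurable g) :
    ∫⁻ x in s, g x ∂gammaMeasure a 1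
      = ∫⁻ x in s, ENNReal.ofReal (x ^ (a - 1) * exp (-x) / Gamma a) * g x := by
  rw [gammaMeasure_one_eq, setLIntegral_withDensity_eq_setLIntegral_mul _ (by fun_prop) hg hs,
    Measure.restrict_restrict hs, inter_eq_left.2 hs0]
  rfl

lemma gammaMeasure_one_Iio (u : ℝ) :
    gammaMeasure a 1 (Iio u)
      = ∫⁻ x in Ioo 0 u, ENNReal.ofReal (x ^ (a - 1) * exp (-x) / Gamma a) := by
  rw [gammaMeasure_one_eq, withDensity_apply _ measurableSet_Iio,
    Measure.restrict_restrict measurableSet_Iio, Iio_inter_Ioi]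

lemma lintegral_Ioo_rpow_sub_one_mul (ha : 0 < a) {u : ℝ} (hu : 0 ≤ u) {C : ℝ}
    (hC : 0 ≤ C) :
    ∫⁻ x in Ioo 0 u, ENNReal.ofReal (x ^ (a - 1) * C) = ENNReal.ofReal (u ^ a / a * C) := by
  have hint : IntegrableOn (fun x : ℝ => x ^ (a - 1)) (Ioo 0 u) :=
    (intervalIntegrable_iff_integrableOn_Ioo_of_le hu).1
      (intervalIntegral.intervalIntegrable_rpow' (by linarith))
  rw [← ofReal_integral_eq_lintegral_ofReal (hint.mul_const C)
    ((ae_restrict_iff' measurableSet_Ioo).2 (ae_of_all _ fun x hx => by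
      have := hx.1; positivity)),
    integral_mul_const, ← integral_Ioc_eq_integral_Ioo, ← intervalIntegral.integral_of_le hu,
    integral_rpow (Or.inl (by linarith)), sub_add_cancel, zero_rpow ha.ne', sub_zero]

lemma gammaMeasure_one_Iio_le (ha : 0 < a) {u : ℝ} (hu : 0 ≤ u) :
    gammaMeasure a 1 (Iio u) ≤ ENNReal.ofReal (u ^ a / Gamma (a + 1)) := by
  calc gammaMeasure a 1 (Iio u)
      ≤ ∫⁻ x in Ioo 0 u, ENNReal.ofReal (x ^ (a - 1) * (Gamma a)⁻¹) := by
        rw [gammaMeasure_one_Iio]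
        refine setLIntegral_mono' measurableSet_Ioo fun x hx => ENNReal.ofReal_le_ofReal ?_
        have hexp : exp (-x) ≤ 1 := exp_le_one_iff.2 (by linarith [hx.1])
        have := hx.1
        rw [div_eq_mul_inv]
        gcongr
        exact mul_le_of_le_one_right (by positivity) hexp
    _ = ENNReal.ofReal (u ^ a / Gamma (a + 1)) := by
        rw [lintegral_Ioo_rpow_sub_one_mul ha hu (by positivity), Gamma_add_one ha.ne']
        ring_nf

lemma ofReal_le_gammaMeasure_one_Iio (ha : 0 < a) {u : ℝ} (hu : 0 ≤ u) :
    ENNReal.ofReal (u ^ a * exp (-u) / Gamma (a + 1)) ≤ gammaMeasure a 1 (Iio u) := by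
  calc ENNReal.ofReal (u ^ a * exp (-u) / Gamma (a + 1))
      = ∫⁻ x in Ioo 0 u, ENNReal.ofReal (x ^ (a - 1) * (exp (-u) / Gamma a)) := by
        rw [lintegral_Ioo_rpow_sub_one_mul ha hu (by positivity), Gamma_add_one ha.ne']
        ring_nf
    _ ≤ gammaMeasure a 1 (Iio u) := by
        rw [gammaMeasure_one_Iio]
        refine setLIntegral_mono' measurableSet_Ioo fun x hx => ENNReal.ofReal_le_ofReal ?_
        have := hx.1
        rw [mul_div_assoc']
        gcongr
        exact hx.2.le

lemma rpow_sub_one_mul_div_rpow {x : ℝ} (hx : 0 < x) {t : ℝ} (ht : 0 ≤ t) :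
    x ^ (a - 1) * (t / x) ^ a = t ^ a * x⁻¹ := by
  have := (rpow_pos_of_pos hx a).ne'
  rw [rpow_sub_one hx.ne', div_rpow ht hx.le]
  field_simp

lemma Gamma_mul_Gamma_add_one_pos (ha : 0 < a) : 0 < Gamma a * Gamma (a + 1) :=
  mul_pos (Gamma_pos_of_pos ha) (Gamma_pos_of_pos (by linarith))

lemma lintegral_Ici_gammaMeasure_one_Iio_div_le (ha : 0 < a) {t c : ℝ} (ht : 0 ≤ t)
    (hc0 : 0 < c) (hc1 : c ≤ 1) :
    ∫⁻ x in Ici c, gammaMeasure a 1 (Iio (t / x)) ∂gammaMeasure a 1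
      ≤ ENNReal.ofReal (t ^ a / (Gamma a * Gamma (a + 1)) * (1 - log c)) := by
  have hK : 0 ≤ t ^ a / (Gamma a * Gamma (a + 1)) := by
    have := Gamma_mul_Gamma_add_one_pos ha; positivity
  calc ∫⁻ x in Ici c, gammaMeasure a 1 (Iio (t / x)) ∂gammaMeasure a 1
      ≤ ∫⁻ x in Ici c, ENNReal.ofReal ((t / x) ^ a / Gamma (a + 1)) ∂gammaMeasure a 1 :=
        setLIntegral_mono' measurableSet_Ici fun x hx =>
          gammaMeasure_one_Iio_le ha (div_nonneg ht (hc0.le.trans hx))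
    _ = ∫⁻ x in Ici c, ENNReal.ofReal (t ^ a / (Gamma a * Gamma (a + 1)))
          * ENNReal.ofReal (exp (-x) * x⁻¹) := by
        rw [setLIntegral_gammaMeasure_one measurableSet_Ici (Ici_subset_Ioi.2 hc0) (by fun_prop)]
        refine setLIntegral_congr_fun measurableSet_Ici fun x hx => ?_
        have hx0 : 0 < x := hc0.trans_le hx
        rw [← ENNReal.ofReal_mul (by positivity), ← ENNReal.ofReal_mul hK]
        congr 1
        linear_combination exp (-x) / (Gamma a * Gamma (a + 1)) * rpow_sub_one_mul_div_rpow hx0 ht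
    _ ≤ ENNReal.ofReal (t ^ a / (Gamma a * Gamma (a + 1))) * ENNReal.ofReal (1 - log c) := by
        rw [lintegral_const_mul _ (by fun_prop)]
        gcongr
        exact lintegral_Ici_exp_neg_mul_inv_le hc0 hc1
    _ = ENNReal.ofReal (t ^ a / (Gamma a * Gamma (a + 1)) * (1 - log c)) :=
        (ENNReal.ofReal_mul hK).symm

lemma ofReal_le_lintegral_Icc_gammaMeasure_one_Iio_div (ha : 0 < a) {t ε : ℝ} (ht : 0 < t)
    (hε : 0 < ε) (htε : t ≤ ε ^ 2) :
    ENNReal.ofReal (t ^ a / (Gamma a * Gamma (a + 1)) * exp (-(2 * ε)) * log (ε ^ 2 / t))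
      ≤ ∫⁻ x in Icc (t / ε) ε, gammaMeasure a 1 (Iio (t / x)) ∂gammaMeasure a 1 := by
  have hK : 0 ≤ t ^ a / (Gamma a * Gamma (a + 1)) * exp (-(2 * ε)) := by
    have := Gamma_mul_Gamma_add_one_pos ha; positivity
  have htε' : t / ε ≤ ε := by rw [div_le_iff₀ hε]; nlinarith
  have hpos : Icc (t / ε) ε ⊆ Ioi 0 := fun x hx => (div_pos ht hε).trans_le hx.1
  calc ENNReal.ofReal (t ^ a / (Gamma a * Gamma (a + 1)) * exp (-(2 * ε)) * log (ε ^ 2 / t))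
      = ∫⁻ x in Icc (t / ε) ε,
          ENNReal.ofReal (t ^ a / (Gamma a * Gamma (a + 1)) * exp (-(2 * ε)))
            * ENNReal.ofReal x⁻¹ := by
        rw [lintegral_const_mul _ (by fun_prop), lintegral_Icc_inv (div_pos ht hε) htε',
          ← ENNReal.ofReal_mul hK, div_div_eq_mul_div, ← sq]
    _ ≤ ∫⁻ x in Icc (t / ε) ε, ENNReal.ofReal (x ^ (a - 1) * exp (-x) / Gamma a)
          * ENNReal.ofReal ((t / x) ^ a * exp (-(t / x)) / Gamma (a + 1)) := by
        refine setLIntegral_mono' measurableSet_Icc fun x hx => ?_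
        have hx0 : 0 < x := hpos hx
        have hsum : x + t / x ≤ 2 * ε := by
          have : t / x ≤ ε := by
            rw [div_le_iff₀ hx0, mul_comm, ← div_le_iff₀ hε]; exact hx.1
          linarith [hx.2]
        rw [← ENNReal.ofReal_mul hK, ← ENNReal.ofReal_mul (by positivity)]
        refine ENNReal.ofReal_le_ofReal ?_
        calc t ^ a / (Gamma a * Gamma (a + 1)) * exp (-(2 * ε)) * x⁻¹
            ≤ t ^ a / (Gamma a * Gamma (a + 1)) * exp (-(x + t / x)) * x⁻¹ := by
              gcongr
          _ = _ := by
              rw [neg_add, exp_add]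
              linear_combination -exp (-x) * exp (-(t / x)) / (Gamma a * Gamma (a + 1))
                * rpow_sub_one_mul_div_rpow hx0 ht.le
    _ = ∫⁻ x in Icc (t / ε) ε,
          ENNReal.ofReal ((t / x) ^ a * exp (-(t / x)) / Gamma (a + 1)) ∂gammaMeasure a 1 :=
        (setLIntegral_gammaMeasure_one measurableSet_Icc hpos (by fun_prop)).symm
    _ ≤ ∫⁻ x in Icc (t / ε) ε, gammaMeasure a 1 (Iio (t / x)) ∂gammaMeasure a 1 :=
        setLIntegral_mono' measurableSet_Icc fun x hx =>
          ofReal_le_gammaMeasure_one_Iio ha (div_nonneg ht.le (hpos hx).le)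

lemma gammaMeasure_prod_outageRegion_le (ha : 0 < a) {s t : ℝ} (hs0 : 0 < s) (hs1 : s ≤ 1)
    (ht : 0 ≤ t) :
    (gammaMeasure a 1).prod (gammaMeasure a 1) (outageRegion s t)
      ≤ ENNReal.ofReal (s ^ a / Gamma (a + 1)
          + t ^ a / (Gamma a * Gamma (a + 1)) * (1 - log s)) := by
  have := isProbabilityMeasure_gammaMeasure ha one_pos
  have hG : 0 < Gamma (a + 1) := Gamma_pos_of_pos (by linarith)
  have hK := Gamma_mul_Gamma_add_one_pos ha
  have hlog : 0 ≤ 1 - log s := by linarith [log_nonpos hs0.le hs1]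
  rw [ENNReal.ofReal_add (by positivity) (by positivity)]
  exact (prod_outageRegion_le _ _ hs0 t).trans (add_le_add (gammaMeasure_one_Iio_le ha hs0.le)
    (lintegral_Ici_gammaMeasure_one_Iio_div_le ha ht hs0 hs1))

lemma ofReal_le_gammaMeasure_prod_outageRegion (ha : 0 < a) (s : ℝ) {t ε : ℝ} (ht : 0 < t)
    (hε : 0 < ε) (htε : t ≤ ε ^ 2) :
    ENNReal.ofReal (t ^ a / (Gamma a * Gamma (a + 1)) * exp (-(2 * ε)) * log (ε ^ 2 / t))
      ≤ (gammaMeasure a 1).prod (gammaMeasure a 1) (outageRegion s t) := by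
  have := isProbabilityMeasure_gammaMeasure ha one_pos
  exact (ofReal_le_lintegral_Icc_gammaMeasure_one_Iio_div ha ht hε htε).trans
    ((lintegral_mono_set fun x hx => (div_pos ht hε).trans_le hx.1).trans
      (lintegral_Ioi_le_prod_outageRegion _ _ s t))

end GammaShape

lemma tendsto_log_inv_atTop : Tendsto (fun ρ : ℝ => (log ρ)⁻¹) atTop (𝓝 0) :=
  tendsto_log_atTop.inv_tendsto_atTop

lemma tendsto_rpow_div_log_mul_outage_upper_bound {a s₀ t₀ G K : ℝ} (hs₀ : 0 < s₀)
    (ht₀ : 0 ≤ t₀) :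
    Tendsto (fun ρ : ℝ => ρ ^ a / log ρ *
        ((s₀ / ρ) ^ a / G + (t₀ / ρ) ^ a / K * (1 - log (s₀ / ρ))))
      atTop (𝓝 (t₀ ^ a / K)) := by
  have hlim : Tendsto (fun ρ : ℝ => s₀ ^ a / G * (log ρ)⁻¹
      + t₀ ^ a / K * ((1 - log s₀) * (log ρ)⁻¹ + 1)) atTop (𝓝 (t₀ ^ a / K)) := by
    simpa using (tendsto_log_inv_atTop.const_mul _).add
      (((tendsto_log_inv_atTop.const_mul _).add_const 1).const_mul (t₀ ^ a / K))
  refine hlim.congr' ?_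
  filter_upwards [eventually_gt_atTop 1] with ρ hρ
  have hρ0 : 0 < ρ := one_pos.trans hρ
  have := (log_pos hρ).ne'
  have := (rpow_pos_of_pos hρ0 a).ne'
  rw [div_rpow hs₀.le hρ0.le, div_rpow ht₀ hρ0.le, log_div hs₀.ne' hρ0.ne']
  field_simp
  ring

lemma tendsto_rpow_div_log_mul_outage_lower_bound {a t₀ K : ℝ} (ht₀ : 0 < t₀) :
    Tendsto (fun ρ : ℝ => ρ ^ a / log ρ * ((t₀ / ρ) ^ a / K * exp (-(2 * (log ρ)⁻¹))
        * log ((log ρ)⁻¹ ^ 2 / (t₀ / ρ))))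
      atTop (𝓝 (t₀ ^ a / K)) := by
  have hexp : Tendsto (fun ρ : ℝ => exp (-(2 * (log ρ)⁻¹))) atTop (𝓝 1) := by
    simpa using ((tendsto_log_inv_atTop.const_mul 2).neg).rexp
  have hloglog : Tendsto (fun ρ : ℝ => log (log ρ) / log ρ) atTop (𝓝 0) :=
    isLittleO_log_id_atTop.tendsto_div_nhds_zero.comp tendsto_log_atTop
  have hlim : Tendsto (fun ρ : ℝ => t₀ ^ a / K * exp (-(2 * (log ρ)⁻¹))
      * (1 - 2 * (log (log ρ) / log ρ) - log t₀ * (log ρ)⁻¹))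
        atTop (𝓝 (t₀ ^ a / K)) := by
    simpa using (hexp.const_mul (t₀ ^ a / K)).mul
      (((hloglog.const_mul 2).const_sub 1).sub (tendsto_log_inv_atTop.const_mul (log t₀)))
  refine hlim.congr' ?_
  filter_upwards [eventually_gt_atTop 1] with ρ hρ
  have hρ0 : 0 < ρ := one_pos.trans hρ
  have hL := log_pos hρ
  have := (rpow_pos_of_pos hρ0 a).ne'
  rw [div_rpow ht₀.le hρ0.le, div_div_eq_mul_div, log_div (by positivity) ht₀.ne',
    log_mul (by positivity) hρ0.ne', log_pow, log_inv]
  field_simp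
  ring

theorem tendsto_rpow_div_log_mul_gammaMeasure_prod_outageRegion {a s₀ t₀ : ℝ} (ha : 0 < a)
    (hs₀ : 0 < s₀) (ht₀ : 0 < t₀) :
    Tendsto (fun ρ : ℝ => ρ ^ a / log ρ *
        ((gammaMeasure a 1).prod (gammaMeasure a 1) (outageRegion (s₀ / ρ) (t₀ / ρ))).toReal)
      atTop (𝓝 (t₀ ^ a / (Gamma a * Gamma (a + 1)))) := by
  have := isProbabilityMeasure_gammaMeasure ha one_pos
  have hK := Gamma_mul_Gamma_add_one_pos ha
  have hG : 0 < Gamma (a + 1) := Gamma_pos_of_pos (by linarith)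
  have hsmall : ∀ᶠ ρ : ℝ in atTop, t₀ / ρ ≤ (log ρ)⁻¹ ^ 2 := by
    filter_upwards [(isLittleO_pow_log_id_atTop (n := 2)).bound (inv_pos.2 ht₀),
      eventually_gt_atTop 1] with ρ hbound hρ
    have hρ0 : 0 < ρ := one_pos.trans hρ
    have := log_pos hρ
    rw [norm_pow, norm_of_nonneg this.le, id, norm_of_nonneg hρ0.le] at hbound
    rw [inv_pow, div_le_iff₀ hρ0, inv_mul_eq_div, le_div_iff₀ (by positivity)]
    calc t₀ * log ρ ^ 2 ≤ t₀ * (t₀⁻¹ * ρ) := by gcongr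
      _ = ρ := by field_simp
  refine tendsto_of_tendsto_of_tendsto_of_le_of_le'
    (tendsto_rpow_div_log_mul_outage_lower_bound ht₀)
    (tendsto_rpow_div_log_mul_outage_upper_bound (G := Gamma (a + 1)) hs₀ ht₀.le) ?_ ?_
  · filter_upwards [eventually_gt_atTop 1, hsmall] with ρ hρ hρt
    have hρ0 : 0 < ρ := one_pos.trans hρ
    have := log_pos hρ
    refine mul_le_mul_of_nonneg_left ?_ (by positivity)
    exact (ENNReal.ofReal_le_iff_le_toReal (measure_ne_top _ _)).1
      (ofReal_le_gammaMeasure_prod_outageRegion ha _ (div_pos ht₀ hρ0) (by positivity) hρt)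
  · filter_upwards [eventually_gt_atTop 1, eventually_ge_atTop s₀] with ρ hρ hsρ
    have hρ0 : 0 < ρ := one_pos.trans hρ
    have := log_pos hρ
    have hs1 : s₀ / ρ ≤ 1 := (div_le_one hρ0).2 hsρ
    have hlog : 0 ≤ 1 - log (s₀ / ρ) := by linarith [log_nonpos (by positivity) hs1]
    refine mul_le_mul_of_nonneg_left ?_ (by positivity)
    exact ENNReal.toReal_le_of_le_ofReal (by positivity)
      (gammaMeasure_prod_outageRegion_le ha (by positivity) hs1 (by positivity))

/-- **Theorem 2** (high-SNR outage behavior of the noise-limited system): if `X, Y` are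
independent `Gamma(N,1)` random variables, `θ ∈ (0,1)` and `η, d₁, d₂, γ > 0`, then
`(ρ^N / ln ρ) · Prob(min((1−θ)ρX/d₁, ηθρXY/(d₁d₂)) < γ) → (d₁d₂γ/(ηθ))^N/(Γ(N)Γ(N+1))`
as `ρ → ∞`; in particular the outage probability decays like `ρ^{−N} ln ρ`, i.e. the system
achieves diversity order `N`. -/
theorem outage_noise_limited_high_snr
    {Ω : Type*} [MeasureSpace Ω] [IsProbabilityMeasure (ℙ : Measure Ω)]
    (N : ℕ) (hN : 1 ≤ N) (X Y : Ω → ℝ)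
    (hXY : IndepFun X Y ℙ)
    (hX : Measure.map X ℙ = gammaMeasure N 1)
    (hY : Measure.map Y ℙ = gammaMeasure N 1)
    (θ η d₁ d₂ γ : ℝ) (hθ : θ ∈ Set.Ioo (0 : ℝ) 1)
    (hη : 0 < η) (hd₁ : 0 < d₁) (hd₂ : 0 < d₂) (hγ : 0 < γ) :
    Tendsto (fun ρ : ℝ => ρ ^ N / Real.log ρ *
        (ℙ {ω | min ((1 - θ) * ρ * X ω / d₁)
            (η * θ * ρ / (d₁ * d₂) * (X ω * Y ω)) < γ}).toReal)
      atTop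
      (nhds ((d₁ * d₂ * γ / (η * θ)) ^ N / (Real.Gamma N * Real.Gamma (N + 1)))) := by
  have hθ0 : 0 < θ := hθ.1
  have hθ1 : 0 < 1 - θ := sub_pos.2 hθ.2
  have hN0 : (0 : ℝ) < N := by exact_mod_cast hN
  have := isProbabilityMeasure_gammaMeasure hN0 one_pos
  have hXm : AEMeasurable X ℙ := .of_map_ne_zero (hX ▸ IsProbabilityMeasure.ne_zero _)
  have hYm : AEMeasurable Y ℙ := .of_map_ne_zero (hY ▸ IsProbabilityMeasure.ne_zero _)
  have hlaw :
      Measure.map (fun ω => (X ω, Y ω)) ℙ = (gammaMeasure N 1).prod (gammaMeasure N 1) := by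
    rw [(indepFun_iff_map_prod_eq_prod_map_map hXm hYm).1 hXY, hX, hY]
  have hevent : ∀ ρ > 0,
      {ω | min ((1 - θ) * ρ * X ω / d₁) (η * θ * ρ / (d₁ * d₂) * (X ω * Y ω)) < γ}
        = (fun ω => (X ω, Y ω)) ⁻¹'
          outageRegion (γ * d₁ / (1 - θ) / ρ) (γ * (d₁ * d₂) / (η * θ) / ρ) := by
    intro ρ hρ
    ext ω
    simp only [mem_ofPred_eq, mem_preimage, outageRegion, min_lt_iff]
    refine or_congr ?_ ?_
    · rw [div_div, lt_div_iff₀ (by positivity), div_lt_iff₀ hd₁]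
      constructor <;> intro h <;> linarith
    · rw [div_div, lt_div_iff₀ (by positivity), div_mul_eq_mul_div,
        div_lt_iff₀ (by positivity)]
      constructor <;> intro h <;> linarith
  have hlim := tendsto_rpow_div_log_mul_gammaMeasure_prod_outageRegion hN0
    (s₀ := γ * d₁ / (1 - θ)) (by positivity)
    (t₀ := γ * (d₁ * d₂) / (η * θ)) (by positivity)
  rw [show d₁ * d₂ * γ / (η * θ) = γ * (d₁ * d₂) / (η * θ) by ring, ← rpow_natCast]
  refine hlim.congr' ?_
  filter_upwards [eventually_gt_atTop 0] with ρ hρ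
  rw [rpow_natCast, hevent ρ hρ,
    ← Measure.map_apply_of_aemeasurable (hXm.prodMk hYm) (measurableSet_outageRegion _ _), hlaw]
end

section
/- Let γ₁ and γ₂ be almost surely positive random variables on a probability space such that log(1+γ₁), log(1+γ₂), log γ₁ and log γ₂ are all integrable. Then E[ log( (1+γ₁)(1+γ₂) / (1+γ₁+γ₂) ) ] ≤ E[ log(1+γ₁) ] + E[ log(1+γ₂) ] − log( 1 + e^{E[log γ₁]} + e^{E[log γ₂]} ). Equivalently, since 1 + γ₁γ₂/(γ₁+γ₂+1) = (1+γ₁)(1+γ₂)/(1+γ₁+γ₂), the ergodic capacity (1/2)E[log₂(1 + γ₁γ₂/(γ₁+γ₂+1))] of a dual-hop amplify-and-forward link is upper bounded by (1/2)[E log₂(1+γ₁) + E log₂(1+γ₂) − log₂(1 + e^{E ln γ₁} + e^{E ln γ₂})]. -/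
/-!
The gap between the two sides is `E[log(1 + γ₁ + γ₂)] - log(1 + e^{E log γ₁} + e^{E log γ₂})`,
which is nonnegative by Jensen's inequality for the convex log-sum-exp function
`(a, b) ↦ log(1 + e^a + e^b)` evaluated at `(log γ₁, log γ₂)`. Jensen is applied through a
supporting hyperplane of log-sum-exp, which is concavity of `log` at the points `xᵢ / wᵢ` for the
softmax weights `wᵢ = e^{aᵢ} / ∑ⱼ e^{aⱼ}`.
-/

open MeasureTheory ProbabilityTheory Real

theorem Real.log_sum_exp_add_sum_le_log_sum {ι : Type*} [Fintype ι] [Nonempty ι]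
    (a x : ι → ℝ) (hx : ∀ i, 0 < x i) :
    log (∑ i, exp (a i)) + ∑ i, exp (a i) / (∑ j, exp (a j)) * (log (x i) - a i) ≤
      log (∑ i, x i) := by
  set S := ∑ j, exp (a j)
  have hS : 0 < S := Finset.sum_pos (fun i _ => exp_pos (a i)) Finset.univ_nonempty
  set w : ι → ℝ := fun i => exp (a i) / S
  have hw : ∀ i, 0 < w i := fun i => div_pos (exp_pos _) hS
  have hw_sum : ∑ i, w i = 1 := by rw [← Finset.sum_div, div_self hS.ne']
  have jensen := strictConcaveOn_log_Ioi.concaveOn.le_map_sum (t := Finset.univ)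
    (p := fun i => x i / w i) (fun i _ => (hw i).le) hw_sum
    (fun i _ => div_pos (hx i) (hw i))
  have h_points : ∑ i, w i • (x i / w i) = ∑ i, x i :=
    Finset.sum_congr rfl fun i _ => by rw [smul_eq_mul, mul_div_cancel₀ _ (hw i).ne']
  have h_values : ∑ i, w i • log (x i / w i) =
      log S + ∑ i, w i * (log (x i) - a i) := by
    have h_log (i : ι) : log (x i / w i) = log S + (log (x i) - a i) := by
      rw [log_div (hx i).ne' (hw i).ne', log_div (exp_pos _).ne' hS.ne', log_exp]; ring
    simp only [smul_eq_mul, h_log, mul_add, Finset.sum_add_distrib, ← Finset.sum_mul, hw_sum,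
      one_mul]
  rwa [h_points, h_values] at jensen

theorem Real.log_one_add_add_le {x y : ℝ} (hx : 0 ≤ x) (hy : 0 ≤ y) :
    log (1 + x + y) ≤ log (1 + x) + log (1 + y) := by
  rw [← log_mul (by positivity) (by positivity)]
  exact log_le_log (by positivity) (by nlinarith)

theorem Real.one_add_mul_div_add_add_one {x y : ℝ} (h : x + y + 1 ≠ 0) :
    1 + x * y / (x + y + 1) = (1 + x) * (1 + y) / (1 + x + y) := by
  rw [show 1 + x + y = x + y + 1 by ring]
  field_simp
  ring

section Jensen

variable {Ω ι : Type*} [MeasurableSpace Ω] {μ : Measure Ω} [IsProbabilityMeasure μ]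
  [Fintype ι] [Nonempty ι]

theorem log_sum_exp_integral_log_le_integral_log_sum (X : ι → Ω → ℝ)
    (hpos : ∀ i, ∀ᵐ ω ∂μ, 0 < X i ω) (hlog : ∀ i, Integrable (fun ω => log (X i ω)) μ)
    (hlog_sum : Integrable (fun ω => log (∑ i, X i ω)) μ) :
    log (∑ i, exp (∫ ω, log (X i ω) ∂μ)) ≤ ∫ ω, log (∑ i, X i ω) ∂μ := by
  set a : ι → ℝ := fun i => ∫ ω, log (X i ω) ∂μ
  set w : ι → ℝ := fun i => exp (a i) / ∑ j, exp (a j)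
  have h_int (i : ι) : Integrable (fun ω => w i * (log (X i ω) - a i)) μ :=
    ((hlog i).sub (integrable_const _)).const_mul _
  have h_centered (i : ι) : ∫ ω, w i * (log (X i ω) - a i) ∂μ = 0 := by
    rw [integral_const_mul, integral_sub (hlog i) (integrable_const _), integral_const,
      probReal_univ, one_smul, sub_self, mul_zero]
  have h_support : ∀ᵐ ω ∂μ,
      log (∑ i, exp (a i)) + ∑ i, w i * (log (X i ω) - a i) ≤ log (∑ i, X i ω) := by
    filter_upwards [ae_all_iff.mpr hpos] with ω hω
    exact log_sum_exp_add_sum_le_log_sum a (fun i => X i ω) hω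
  have h_sum_int : Integrable (fun ω => ∑ i, w i * (log (X i ω) - a i)) μ :=
    integrable_finsetSum _ fun i _ => h_int i
  have h_minorant : ∫ ω, log (∑ i, exp (a i)) + ∑ i, w i * (log (X i ω) - a i) ∂μ =
      log (∑ i, exp (a i)) := by
    rw [integral_add (integrable_const _) h_sum_int, integral_finsetSum _ fun i _ => h_int i,
      Finset.sum_congr rfl fun i _ => h_centered i, Finset.sum_const_zero, add_zero,
      integral_const, probReal_univ, one_smul]
  calc log (∑ i, exp (a i))
      = ∫ ω, log (∑ i, exp (a i)) + ∑ i, w i * (log (X i ω) - a i) ∂μ := h_minorant.symm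
    _ ≤ ∫ ω, log (∑ i, X i ω) ∂μ :=
      integral_mono_ae ((integrable_const _).add h_sum_int) hlog_sum h_support

theorem log_one_add_exp_add_exp_le_integral {f g : Ω → ℝ} (hf : ∀ᵐ ω ∂μ, 0 < f ω)
    (hg : ∀ᵐ ω ∂μ, 0 < g ω) (hf_log : Integrable (fun ω => log (f ω)) μ)
    (hg_log : Integrable (fun ω => log (g ω)) μ)
    (h_int : Integrable (fun ω => log (1 + f ω + g ω)) μ) :
    log (1 + exp (∫ ω, log (f ω) ∂μ) + exp (∫ ω, log (g ω) ∂μ)) ≤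
      ∫ ω, log (1 + f ω + g ω) ∂μ := by
  have h := log_sum_exp_integral_log_le_integral_log_sum (μ := μ) ![fun _ => 1, f, g]
    (by intro i; fin_cases i <;> simp [hf, hg])
    (by intro i; fin_cases i <;> simp [hf_log, hg_log])
    (by simpa [Fin.sum_univ_three] using h_int)
  simpa [Fin.sum_univ_three] using h

end Jensen

section Integrability

variable {Ω : Type*} [MeasurableSpace Ω] {μ : Measure Ω}

theorem aestronglyMeasurable_of_log {f : Ω → ℝ} (hpos : ∀ᵐ ω ∂μ, 0 < f ω)
    (hlog : AEStronglyMeasurable (fun ω => log (f ω)) μ) : AEStronglyMeasurable f μ :=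
  (continuous_exp.comp_aestronglyMeasurable hlog).congr <| by
    filter_upwards [hpos] with ω hω using exp_log hω

theorem integrable_log_one_add_add {f g : Ω → ℝ} (hf : ∀ᵐ ω ∂μ, 0 < f ω)
    (hg : ∀ᵐ ω ∂μ, 0 < g ω)
    (hf_meas : AEStronglyMeasurable f μ) (hg_meas : AEStronglyMeasurable g μ)
    (hf_int : Integrable (fun ω => log (1 + f ω)) μ)
    (hg_int : Integrable (fun ω => log (1 + g ω)) μ) :
    Integrable (fun ω => log (1 + f ω + g ω)) μ := by
  refine (hf_int.add hg_int).mono'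
    (measurable_log.comp_aemeasurable ((hf_meas.aemeasurable.const_add 1).add
      hg_meas.aemeasurable)).aestronglyMeasurable ?_
  filter_upwards [hf, hg] with ω hfω hgω
  rw [norm_of_nonneg (log_nonneg (by linarith))]
  exact log_one_add_add_le hfω.le hgω.le

end Integrability

/-- General ergodic-capacity upper bound for a dual-hop amplify-and-forward link
(the bound underlying Theorems 3, 6, 9 and 12 of the paper): if `γ₁, γ₂` are a.s. positive
random variables with `log(1+γ₁), log(1+γ₂), log γ₁, log γ₂` integrable, then
`E[log((1+γ₁)(1+γ₂)/(1+γ₁+γ₂))] ≤ E[log(1+γ₁)] + E[log(1+γ₂)]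
  − log(1 + e^{E[log γ₁]} + e^{E[log γ₂]})`;
equivalently, since `1 + γ₁γ₂/(γ₁+γ₂+1) = (1+γ₁)(1+γ₂)/(1+γ₁+γ₂)`, the ergodic capacity
`(1/2)E[log₂(1 + γ₁γ₂/(γ₁+γ₂+1))]` is upper bounded by
`(1/2)(E[log₂(1+γ₁)] + E[log₂(1+γ₂)] − log₂(1 + e^{E[ln γ₁]} + e^{E[ln γ₂]}))`. -/
theorem ergodic_capacity_upper_bound
    {Ω : Type*} [MeasureSpace Ω] [IsProbabilityMeasure (ℙ : Measure Ω)]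
    (γ₁ γ₂ : Ω → ℝ)
    (hpos₁ : ∀ᵐ ω ∂ℙ, 0 < γ₁ ω) (hpos₂ : ∀ᵐ ω ∂ℙ, 0 < γ₂ ω)
    (hint₁ : Integrable (fun ω => Real.log (1 + γ₁ ω)) ℙ)
    (hint₂ : Integrable (fun ω => Real.log (1 + γ₂ ω)) ℙ)
    (hlog₁ : Integrable (fun ω => Real.log (γ₁ ω)) ℙ)
    (hlog₂ : Integrable (fun ω => Real.log (γ₂ ω)) ℙ) :
    (∫ ω, Real.log ((1 + γ₁ ω) * (1 + γ₂ ω) / (1 + γ₁ ω + γ₂ ω)) ≤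
      (∫ ω, Real.log (1 + γ₁ ω)) + (∫ ω, Real.log (1 + γ₂ ω)) -
        Real.log (1 + Real.exp (∫ ω, Real.log (γ₁ ω)) +
          Real.exp (∫ ω, Real.log (γ₂ ω)))) ∧
    ((1 / 2) * ∫ ω, Real.logb 2 (1 + γ₁ ω * γ₂ ω / (γ₁ ω + γ₂ ω + 1)) ≤
      (1 / 2) * ((∫ ω, Real.logb 2 (1 + γ₁ ω)) + (∫ ω, Real.logb 2 (1 + γ₂ ω)) -
        Real.logb 2 (1 + Real.exp (∫ ω, Real.log (γ₁ ω)) +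
          Real.exp (∫ ω, Real.log (γ₂ ω))))) := by
  have hm₁ := aestronglyMeasurable_of_log hpos₁ hlog₁.aestronglyMeasurable
  have hm₂ := aestronglyMeasurable_of_log hpos₂ hlog₂.aestronglyMeasurable
  have h_sum_int := integrable_log_one_add_add hpos₁ hpos₂ hm₁ hm₂ hint₁ hint₂
  have h_jensen := log_one_add_exp_add_exp_le_integral hpos₁ hpos₂ hlog₁ hlog₂ h_sum_int
  have h_split : (fun ω => log ((1 + γ₁ ω) * (1 + γ₂ ω) / (1 + γ₁ ω + γ₂ ω))) =ᵐ[ℙ]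
      fun ω => log (1 + γ₁ ω) + log (1 + γ₂ ω) - log (1 + γ₁ ω + γ₂ ω) := by
    filter_upwards [hpos₁, hpos₂] with ω h₁ h₂
    rw [log_div (by positivity) (by positivity), log_mul (by positivity) (by positivity)]
  have h_nats : ∫ ω, log ((1 + γ₁ ω) * (1 + γ₂ ω) / (1 + γ₁ ω + γ₂ ω)) ≤
      (∫ ω, log (1 + γ₁ ω)) + (∫ ω, log (1 + γ₂ ω)) -
        log (1 + exp (∫ ω, log (γ₁ ω)) + exp (∫ ω, log (γ₂ ω))) := by
    have h_sum₁₂ : Integrable (fun ω => log (1 + γ₁ ω) + log (1 + γ₂ ω)) ℙ := hint₁.add hint₂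
    rw [integral_congr_ae h_split, integral_sub h_sum₁₂ h_sum_int, integral_add hint₁ hint₂]
    linarith
  refine ⟨h_nats, ?_⟩
  have h_bits : (fun ω => logb 2 (1 + γ₁ ω * γ₂ ω / (γ₁ ω + γ₂ ω + 1))) =ᵐ[ℙ]
      fun ω => log ((1 + γ₁ ω) * (1 + γ₂ ω) / (1 + γ₁ ω + γ₂ ω)) / log 2 := by
    filter_upwards [hpos₁, hpos₂] with ω h₁ h₂
    rw [logb, one_add_mul_div_add_add_one (by positivity)]
  rw [integral_congr_ae h_bits]
  simp only [logb, integral_div, ← add_div, ← sub_div]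
  gcongr
end

section
/- Let N ≥ 1 be an integer, let X have the Gamma(N,1) distribution and let U be an independent exponential random variable with rate λ > 0. Then for every s > 0, Prob( X < (U+1)·s ) = 1 − λ·e^{−s} · Σ_{m=0}^{N−1} s^m · Σ_{n=0}^{m} (1/(m−n)!) · (λ + s)^{−(n+1)}. -/
open MeasureTheory ProbabilityTheory Real Set
open scoped ENNReal Nat

/-!
Conditionally on `U = u`, the event is `X < (u + 1) s`, whose probability is the Erlang c.d.f.
`1 - e^{-t} ∑_{m<N} t^m / m!` at `t = (u + 1) s`. Integrating against the density `λ e^{-λu}`,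
the factor `e^{-λu} e^{-(u+1)s} = e^{-s} e^{-(λ+s)u}` leaves the moments
`∫₀^∞ (u + 1)^m e^{-(λ+s)u} du`, which the binomial expansion and `∫₀^∞ uⁿ e^{-cu} du = n!/c^{n+1}`
evaluate in closed form.
-/

noncomputable def erlangCDF (N : ℕ) (t : ℝ) : ℝ :=
  1 - exp (-t) * ∑ m ∈ Finset.range N, t ^ m / m !

@[fun_prop]
lemma continuous_erlangCDF (N : ℕ) : Continuous (erlangCDF N) := by
  unfold erlangCDF
  fun_prop

lemma erlangCDF_nonneg (N : ℕ) {t : ℝ} (ht : 0 ≤ t) : 0 ≤ erlangCDF N t := by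
  have hsum := sum_le_exp_of_nonneg ht N
  have hexp : exp (-t) * exp t = 1 := by rw [← exp_add, neg_add_cancel, exp_zero]
  unfold erlangCDF
  nlinarith [exp_pos (-t)]

lemma erlangCDF_zero {N : ℕ} (hN : N ≠ 0) : erlangCDF N 0 = 0 := by
  obtain ⟨K, rfl⟩ := Nat.exists_eq_succ_of_ne_zero hN
  simp [erlangCDF, Finset.sum_range_succ']

lemma hasDerivAt_sum_range_pow_div_factorial (K : ℕ) (t : ℝ) :
    HasDerivAt (fun t : ℝ => ∑ m ∈ Finset.range (K + 1), t ^ m / m !)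
      (∑ m ∈ Finset.range K, t ^ m / m !) t := by
  have hterm : ∀ m : ℕ, HasDerivAt (fun t : ℝ => t ^ (m + 1) / (m + 1)!) (t ^ m / m !) t := by
    intro m
    refine ((hasDerivAt_pow (m + 1) t).div_const ((m + 1)! : ℝ)).congr_deriv ?_
    rw [Nat.factorial_succ]
    push_cast
    field_simp
  simp_rw [Finset.sum_range_succ' _ K]
  simpa using (HasDerivAt.fun_sum (u := Finset.range K) fun m _ => hterm m).add_const 1

lemma hasDerivAt_erlangCDF {N : ℕ} (hN : N ≠ 0) (t : ℝ) :
    HasDerivAt (erlangCDF N) (t ^ (N - 1) * exp (-t) / (N - 1)!) t := by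
  obtain ⟨K, rfl⟩ := Nat.exists_eq_succ_of_ne_zero hN
  refine (((hasDerivAt_neg t).exp.mul
    (hasDerivAt_sum_range_pow_div_factorial K t)).const_sub 1).congr_deriv ?_
  rw [Finset.sum_range_succ]
  simp only [mul_neg, mul_one, neg_mul, neg_add_rev, neg_neg, Nat.succ_eq_add_one,
    add_tsub_cancel_right]
  ring

lemma gammaPDFReal_natCast_of_nonneg {N : ℕ} (hN : N ≠ 0) (r : ℝ) {x : ℝ} (hx : 0 ≤ x) :
    gammaPDFReal N r x = r * ((r * x) ^ (N - 1) * exp (-(r * x)) / (N - 1)!) := by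
  obtain ⟨K, rfl⟩ := Nat.exists_eq_succ_of_ne_zero hN
  rw [gammaPDFReal, if_pos hx, rpow_natCast, Nat.succ_sub_one, Nat.cast_succ,
    Gamma_nat_eq_factorial, add_sub_cancel_right, rpow_natCast, mul_pow, pow_succ]
  ring

lemma gammaMeasure_natCast_Iio {N : ℕ} (hN : N ≠ 0) {r : ℝ} (hr : 0 ≤ r) {t : ℝ}
    (ht : 0 ≤ t) :
    gammaMeasure N r (Iio t) = ENNReal.ofReal (erlangCDF N (r * t)) := by
  have hderiv : ∀ x, HasDerivAt (fun x => erlangCDF N (r * x))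
      (r * ((r * x) ^ (N - 1) * exp (-(r * x)) / (N - 1)!)) x := fun x =>
    ((hasDerivAt_erlangCDF hN (r * x)).comp x ((hasDerivAt_id' x).const_mul r)).congr_deriv
      (by ring)
  have hcont : Continuous fun x : ℝ => r * ((r * x) ^ (N - 1) * exp (-(r * x)) / (N - 1)!) := by
    fun_prop
  have hpdf : ∫⁻ x in Ico 0 t, gammaPDF N r x =
      ∫⁻ x in Ico 0 t, ENNReal.ofReal (r * ((r * x) ^ (N - 1) * exp (-(r * x)) / (N - 1)!)) :=
    setLIntegral_congr_fun measurableSet_Ico fun x hx => by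
      rw [gammaPDF, gammaPDFReal_natCast_of_nonneg hN r hx.1]
  rw [gammaMeasure, withDensity_apply _ measurableSet_Iio, ← Iio_union_Ico_eq_Iio ht,
    lintegral_union measurableSet_Ico
      (Iio_disjoint_Ici le_rfl |>.mono_right Ico_subset_Ici_self),
    lintegral_gammaPDF_of_nonpos le_rfl, zero_add, hpdf,
    ← ofReal_integral_eq_lintegral_ofReal (hcont.integrableOn_Icc.mono_set Ico_subset_Icc_self)
      (ae_restrict_of_forall_mem measurableSet_Ico fun x hx => by
        have := hx.1; positivity),
    integral_Ico_eq_integral_Ioo, ← integral_Ioc_eq_integral_Ioo,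
    ← intervalIntegral.integral_of_le ht,
    intervalIntegral.integral_eq_sub_of_hasDerivAt (fun x _ => hderiv x)
      (hcont.intervalIntegrable 0 t),
    mul_zero, erlangCDF_zero hN, sub_zero]

lemma lintegral_expMeasure {r : ℝ} {f : ℝ → ℝ≥0∞} (hf : Measurable f) :
    ∫⁻ u, f u ∂expMeasure r = ∫⁻ u in Ioi 0, ENNReal.ofReal (r * exp (-(r * u))) * f u := by
  have hpdf : Measurable (gammaPDF 1 r) := (measurable_gammaPDFReal 1 r).ennreal_ofReal
  rw [expMeasure, gammaMeasure, lintegral_withDensity_eq_lintegral_mul _ hpdf hf,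
    ← setLIntegral_eq_of_support_subset (s := Ici 0), setLIntegral_congr Ioi_ae_eq_Ici.symm]
  · exact setLIntegral_congr_fun measurableSet_Ioi fun u hu => by
      rw [Pi.mul_apply, show gammaPDF 1 r u = exponentialPDF r u from rfl,
        exponentialPDF_of_nonneg hu.le]
  · exact fun u hu => mem_Ici.mpr <| not_lt.mp fun hneg => hu (by simp [gammaPDF_of_neg hneg])

lemma ProbabilityTheory.IndepFun.measure_lt_comp_eq_lintegral {Ω β : Type*} [MeasurableSpace Ω]
    [MeasurableSpace β] {μ : Measure Ω} {ν : Measure ℝ} {κ : Measure β} [SigmaFinite ν]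
    [SigmaFinite κ] {X : Ω → ℝ} {U : Ω → β} (hXU : IndepFun X U μ) (hXm : AEMeasurable X μ)
    (hUm : AEMeasurable U μ) (hX : μ.map X = ν) (hU : μ.map U = κ) {g : β → ℝ}
    (hg : Measurable g) :
    μ {ω | X ω < g (U ω)} = ∫⁻ u, ν (Iio (g u)) ∂κ := by
  subst hX hU
  have hS : MeasurableSet {p : ℝ × β | p.1 < g p.2} :=
    measurableSet_lt measurable_fst (hg.comp measurable_snd)
  calc μ {ω | X ω < g (U ω)} = μ.map (fun ω => (X ω, U ω)) {p | p.1 < g p.2} :=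
        (Measure.map_apply_of_aemeasurable (hXm.prodMk hUm) hS).symm
    _ = ((μ.map X).prod (μ.map U)) {p | p.1 < g p.2} := by
        rw [(indepFun_iff_map_prod_eq_prod_map_map' hXm hUm inferInstance inferInstance).mp hXU]
    _ = ∫⁻ u, μ.map X (Iio (g u)) ∂(μ.map U) := Measure.prod_apply_symm hS

section ExpMoments

variable {c : ℝ}

lemma integrableOn_pow_mul_exp_neg_mul (hc : 0 < c) (n : ℕ) :
    IntegrableOn (fun u : ℝ => u ^ n * exp (-(c * u))) (Ioi 0) :=
  (integrableOn_rpow_mul_exp_neg_mul_rpow (s := n) (by linarith [n.cast_nonneg (α := ℝ)])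
    one_pos hc).congr_fun (fun u _ => by simp [rpow_natCast]) measurableSet_Ioi

lemma integral_pow_mul_exp_neg_mul_Ioi (hc : 0 < c) (n : ℕ) :
    ∫ u in Ioi 0, u ^ n * exp (-(c * u)) = n ! / c ^ (n + 1) := by
  have h := integral_rpow_mul_exp_neg_mul_Ioi (a := n + 1) (by positivity) hc
  rw [add_sub_cancel_right, Gamma_nat_eq_factorial, ← Nat.cast_succ, rpow_natCast] at h
  simp_rw [rpow_natCast] at h
  rw [h, one_div_pow, one_div_mul_eq_div]

lemma integrableOn_add_one_pow_mul_exp_neg_mul (hc : 0 < c) (m : ℕ) :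
    IntegrableOn (fun u : ℝ => (u + 1) ^ m * exp (-(c * u))) (Ioi 0) := by
  simp_rw [add_pow, one_pow, mul_one, Finset.sum_mul]
  exact integrable_finsetSum _ fun n _ =>
    IntegrableOn.congr_fun ((integrableOn_pow_mul_exp_neg_mul hc n).const_mul (m.choose n))
      (fun u _ => by ring) measurableSet_Ioi

lemma integral_add_one_pow_mul_exp_neg_mul_Ioi (hc : 0 < c) (m : ℕ) :
    ∫ u in Ioi 0, (u + 1) ^ m * exp (-(c * u)) =
      m ! * ∑ n ∈ Finset.range (m + 1), 1 / ((m - n)! : ℝ) * (c ^ (n + 1))⁻¹ := by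
  have hterm : ∀ n ∈ Finset.range (m + 1),
      ∫ u in Ioi 0, u ^ n * 1 ^ (m - n) * (m.choose n : ℝ) * exp (-(c * u)) =
        m ! * (1 / ((m - n)! : ℝ) * (c ^ (n + 1))⁻¹) := fun n hn => by
    simp_rw [one_pow, mul_one, mul_right_comm _ (m.choose n : ℝ), integral_mul_const,
      integral_pow_mul_exp_neg_mul_Ioi hc,
      Nat.cast_choose ℝ (Finset.mem_range_succ_iff.mp hn)]
    field_simp
  simp_rw [add_pow, Finset.sum_mul]
  rw [integral_finsetSum _ fun n _ => ?_, Finset.mul_sum]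
  · exact Finset.sum_congr rfl hterm
  · exact IntegrableOn.congr_fun ((integrableOn_pow_mul_exp_neg_mul hc n).const_mul _)
      (fun u _ => by ring) measurableSet_Ioi

lemma integral_exp_neg_mul_Ioi (hc : 0 < c) : ∫ u in Ioi 0, exp (-(c * u)) = c⁻¹ := by
  simpa using integral_pow_mul_exp_neg_mul_Ioi hc 0

end ExpMoments

lemma mul_exp_mul_erlangCDF_add_one_mul (N : ℕ) (lam s u : ℝ) :
    lam * exp (-(lam * u)) * erlangCDF N ((u + 1) * s) =
      lam * exp (-(lam * u)) - ∑ m ∈ Finset.range N,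
        lam * exp (-s) * s ^ m / m ! * ((u + 1) ^ m * exp (-((lam + s) * u))) := by
  have hexp : exp (-(lam * u)) * exp (-((u + 1) * s)) = exp (-s) * exp (-((lam + s) * u)) := by
    rw [← exp_add, ← exp_add]
    ring_nf
  rw [erlangCDF, mul_sub, mul_one, Finset.mul_sum, Finset.mul_sum]
  congr 1
  refine Finset.sum_congr rfl fun m _ => ?_
  rw [mul_pow]
  linear_combination (lam * (u + 1) ^ m * s ^ m / m !) * hexp

lemma integral_mul_exp_mul_erlangCDF_add_one_mul (N : ℕ) {lam s : ℝ} (hlam : 0 < lam)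
    (hls : 0 < lam + s) :
    ∫ u in Ioi 0, lam * exp (-(lam * u)) * erlangCDF N ((u + 1) * s) =
      1 - lam * exp (-s) * ∑ m ∈ Finset.range N, s ^ m *
        ∑ n ∈ Finset.range (m + 1), 1 / ((m - n)! : ℝ) * ((lam + s) ^ (n + 1))⁻¹ := by
  have hterm : ∀ m : ℕ, IntegrableOn (fun u : ℝ =>
      lam * exp (-s) * s ^ m / m ! * ((u + 1) ^ m * exp (-((lam + s) * u)))) (Ioi 0) :=
    fun m => (integrableOn_add_one_pow_mul_exp_neg_mul hls m).const_mul _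
  have hexp : IntegrableOn (fun u : ℝ => exp (-(lam * u))) (Ioi 0) := by
    simpa only [neg_mul] using exp_neg_integrableOn_Ioi 0 hlam
  have hdensity : IntegrableOn (fun u : ℝ => lam * exp (-(lam * u))) (Ioi 0) :=
    hexp.const_mul lam
  simp_rw [mul_exp_mul_erlangCDF_add_one_mul]
  rw [integral_sub hdensity (integrable_finsetSum _ fun m _ => hterm m),
    integral_finsetSum _ fun m _ => hterm m, integral_const_mul, integral_exp_neg_mul_Ioi hlam,
    mul_inv_cancel₀ hlam.ne', Finset.mul_sum]
  congr 1
  refine Finset.sum_congr rfl fun m _ => ?_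
  rw [integral_const_mul, integral_add_one_pow_mul_exp_neg_mul_Ioi hls]
  field_simp

theorem cdf_first_hop_sinr_mrc_general
    {Ω : Type*} [MeasureSpace Ω]
    (N : ℕ) (hN : 1 ≤ N) (lam : ℝ) (hlam : 0 < lam) (X U : Ω → ℝ)
    (hXU : IndepFun X U ℙ)
    (hX : Measure.map X ℙ = gammaMeasure N 1)
    (hU : Measure.map U ℙ = expMeasure lam)
    (s : ℝ) (hs : 0 < s) :
    (ℙ {ω | X ω < (U ω + 1) * s}).toReal =
      1 - lam * Real.exp (-s) *
        ∑ m ∈ Finset.range N, s ^ m *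
          ∑ n ∈ Finset.range (m + 1),
            (1 / (Nat.factorial (m - n) : ℝ)) * ((lam + s) ^ (n + 1))⁻¹ := by
  have hN0 : N ≠ 0 := Nat.one_le_iff_ne_zero.mp hN
  have := isProbabilityMeasure_gammaMeasure (a := N) (Nat.cast_pos.mpr hN) one_pos
  have := isProbabilityMeasure_expMeasure hlam
  have hXm : AEMeasurable X ℙ := aemeasurable_of_map_neZero (by rw [hX]; infer_instance)
  have hUm : AEMeasurable U ℙ := aemeasurable_of_map_neZero (by rw [hU]; infer_instance)
  have hcdf : Measurable fun u : ℝ => gammaMeasure N 1 (Iio ((u + 1) * s)) :=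
    Monotone.measurable fun a b hab => measure_mono (Iio_subset_Iio (by nlinarith))
  have hnonneg : 0 ≤ᵐ[volume.restrict (Ioi 0)]
      fun u => lam * exp (-(lam * u)) * erlangCDF N ((u + 1) * s) :=
    ae_restrict_of_forall_mem measurableSet_Ioi fun u (hu : 0 < u) =>
      mul_nonneg (by positivity) (erlangCDF_nonneg N (by positivity))
  have hcont : Continuous fun u => lam * exp (-(lam * u)) * erlangCDF N ((u + 1) * s) := by
    fun_prop
  rw [hXU.measure_lt_comp_eq_lintegral (g := fun u => (u + 1) * s) hXm hUm hX hU (by fun_prop),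
    lintegral_expMeasure hcdf,
    setLIntegral_congr_fun measurableSet_Ioi fun u (hu : 0 < u) => by
      rw [gammaMeasure_natCast_Iio hN0 zero_le_one (by positivity), one_mul,
        ← ENNReal.ofReal_mul (by positivity)],
    ← integral_eq_lintegral_of_nonneg_ae hnonneg hcont.aestronglyMeasurable,
    integral_mul_exp_mul_erlangCDF_add_one_mul N hlam (by linarith)]

/-- The exact c.d.f. of the first-hop SINR of the MRC/MRT scheme (eq. (62) in the proof of
Theorem 4): if `X ~ Gamma(N,1)` and `U ~ Exp(λ)` are independent, then for every `s > 0`,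
`Prob(X < (U+1)s) = 1 − λ e^{−s} Σ_{m=0}^{N−1} s^m Σ_{n=0}^m (1/(m−n)!) (λ+s)^{−(n+1)}`. -/
theorem cdf_first_hop_sinr_mrc
    {Ω : Type*} [MeasureSpace Ω] [IsProbabilityMeasure (ℙ : Measure Ω)]
    (N : ℕ) (hN : 1 ≤ N) (lam : ℝ) (hlam : 0 < lam) (X U : Ω → ℝ)
    (hXU : IndepFun X U ℙ)
    (hX : Measure.map X ℙ = gammaMeasure N 1)
    (hU : Measure.map U ℙ = expMeasure lam)
    (s : ℝ) (hs : 0 < s) :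
    (ℙ {ω | X ω < (U ω + 1) * s}).toReal =
      1 - lam * Real.exp (-s) *
        ∑ m ∈ Finset.range N, s ^ m *
          ∑ n ∈ Finset.range (m + 1),
            (1 / (Nat.factorial (m - n) : ℝ)) * ((lam + s) ^ (n + 1))⁻¹ :=
  cdf_first_hop_sinr_mrc_general N hN lam hlam X U hXU hX hU s hs
end

section
/- Let N ≥ 1 be an integer, let X have the Gamma(N,1) distribution and let U be an independent exponential random variable with rate λ > 0. Then lim_{s→0⁺} s^{−N} · Prob( X < (U+1)·s ) = Σ_{n=0}^{N} λ^{−n} / (N−n)!. -/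
/-!
Conditioning on `U`, the probability is the average over `U` of the Gamma(N,1) c.d.f. `F` at
`(U + 1) s`. Bounding `e^{-x}` between `e^{-t}` and `1` in the density gives
`e^{-t} t^N / N! ≤ F(t) ≤ t^N / N!`, so `s^{-N} F((u + 1) s)` tends to `(u + 1)^N / N!` and is
dominated by it. Dominated convergence, the binomial expansion of `(U + 1)^N` and the exponential
moments `E[U^n] = n! / λ^n` give the limit.
-/

open MeasureTheory ProbabilityTheory Filter Real Set Topology

lemma rpow_inv_mul_rpow_mul_mul_div (c : ℝ) {a r v s : ℝ} (hr : 0 ≤ r) (hv : 0 ≤ v)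
    (hs : 0 < s) : (s ^ a)⁻¹ * ((r * (v * s)) ^ a / c) = (r * v) ^ a / c := by
  rw [← mul_assoc, mul_rpow (by positivity) hs.le]
  field_simp

lemma add_one_pow_eq_sum {R : Type*} [CommSemiring R] (N : ℕ) (x : R) :
    (x + 1) ^ N = ∑ n ∈ Finset.range (N + 1), (N.choose n : R) * x ^ n := by
  rw [add_pow]
  simp [mul_comm]

namespace ProbabilityTheory

section Gamma

variable {a r : ℝ}

instance : NullSingletonClass (gammaMeasure a r) :=
  ⟨fun x => withDensity_absolutelyContinuous _ _ (measure_singleton x)⟩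

lemma ae_nonneg_gammaMeasure : ∀ᵐ x ∂gammaMeasure a r, 0 ≤ x := by
  simp_rw [ae_iff, not_le]
  change gammaMeasure a r (Iio 0) = 0
  rw [gammaMeasure, withDensity_apply _ measurableSet_Iio]
  exact lintegral_gammaPDF_of_nonpos le_rfl

lemma measureReal_gammaMeasure_Iio (ha : 0 < a) (hr : 0 < r) {t : ℝ} (ht : 0 ≤ t) :
    (gammaMeasure a r).real (Iio t)
      = ∫ x in 0..t, r ^ a / Gamma a * x ^ (a - 1) * exp (-(r * x)) := by
  have := isProbabilityMeasure_gammaMeasure ha hr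
  rw [measureReal_congr Iio_ae_eq_Iic, ← cdf_eq_real, cdf_gammaMeasure_eq_integral ha hr,
    setIntegral_eq_of_subset_of_forall_sdiff_eq_zero measurableSet_Iic Icc_subset_Iic_self
      (f := gammaPDFReal a r) (s := Icc 0 t) fun x ⟨hxt, hx⟩ => if_neg fun h => hx ⟨h, hxt⟩,
    integral_Icc_eq_integral_Ioc, ← intervalIntegral.integral_of_le ht]
  refine intervalIntegral.integral_congr fun x hx => if_pos ?_
  exact (uIcc_of_le ht ▸ hx).1

lemma intervalIntegrable_gammaPDF_leadingTerm (ha : 0 < a) (r t : ℝ) :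
    IntervalIntegrable (fun x => r ^ a / Gamma a * x ^ (a - 1)) volume 0 t :=
  (intervalIntegral.intervalIntegrable_rpow' (by linarith)).const_mul _

lemma integral_gammaPDF_leadingTerm (ha : 0 < a) (hr : 0 < r) {t : ℝ} (ht : 0 ≤ t) :
    ∫ x in 0..t, r ^ a / Gamma a * x ^ (a - 1) = (r * t) ^ a / Gamma (a + 1) := by
  rw [intervalIntegral.integral_const_mul, integral_rpow (by left; linarith), sub_add_cancel,
    zero_rpow ha.ne', sub_zero, Gamma_add_one ha.ne', mul_rpow hr.le ht]
  field_simp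

lemma measureReal_gammaMeasure_Iio_le (ha : 0 < a) (hr : 0 < r) {t : ℝ} (ht : 0 ≤ t) :
    (gammaMeasure a r).real (Iio t) ≤ (r * t) ^ a / Gamma (a + 1) := by
  rw [measureReal_gammaMeasure_Iio ha hr ht, ← integral_gammaPDF_leadingTerm ha hr ht]
  refine intervalIntegral.integral_mono_on ht
    ((intervalIntegrable_gammaPDF_leadingTerm ha r t).mul_continuousOn (by fun_prop))
    (intervalIntegrable_gammaPDF_leadingTerm ha r t) fun x hx => ?_
  have : 0 ≤ r ^ a / Gamma a * x ^ (a - 1) := by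
    have := Gamma_pos_of_pos ha; have := hx.1; positivity
  exact mul_le_of_le_one_right this (exp_le_one_iff.2 (by nlinarith [hx.1]))

lemma exp_mul_le_measureReal_gammaMeasure_Iio (ha : 0 < a) (hr : 0 < r) {t : ℝ} (ht : 0 ≤ t) :
    exp (-(r * t)) * ((r * t) ^ a / Gamma (a + 1)) ≤ (gammaMeasure a r).real (Iio t) := by
  rw [measureReal_gammaMeasure_Iio ha hr ht, ← integral_gammaPDF_leadingTerm ha hr ht,
    ← intervalIntegral.integral_const_mul]
  refine intervalIntegral.integral_mono_on ht
    ((intervalIntegrable_gammaPDF_leadingTerm ha r t).const_mul _)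
    ((intervalIntegrable_gammaPDF_leadingTerm ha r t).mul_continuousOn (by fun_prop))
    fun x hx => ?_
  have : 0 ≤ r ^ a / Gamma a * x ^ (a - 1) := by
    have := Gamma_pos_of_pos ha; have := hx.1; positivity
  rw [mul_comm]
  exact mul_le_mul_of_nonneg_left (exp_le_exp.2 (by nlinarith [hx.2])) this

lemma tendsto_measureReal_gammaMeasure_Iio_mul (ha : 0 < a) (hr : 0 < r) {v : ℝ} (hv : 0 ≤ v) :
    Tendsto (fun s => (s ^ a)⁻¹ * (gammaMeasure a r).real (Iio (v * s))) (𝓝[>] 0)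
      (𝓝 ((r * v) ^ a / Gamma (a + 1))) := by
  have hexp : Tendsto (fun s => exp (-(r * (v * s))) * ((r * v) ^ a / Gamma (a + 1))) (𝓝[>] 0)
      (𝓝 ((r * v) ^ a / Gamma (a + 1))) := by
    have : Continuous fun s => exp (-(r * (v * s))) * ((r * v) ^ a / Gamma (a + 1)) := by
      fun_prop
    simpa using this.tendsto 0 |>.mono_left nhdsWithin_le_nhds
  refine tendsto_of_tendsto_of_tendsto_of_le_of_le' hexp tendsto_const_nhds ?_ ?_ <;>
    filter_upwards [self_mem_nhdsWithin] with s (hs : 0 < s) <;>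
    rw [← rpow_inv_mul_rpow_mul_mul_div _ hr.le hv hs]
  · rw [mul_left_comm]
    exact mul_le_mul_of_nonneg_left
      (exp_mul_le_measureReal_gammaMeasure_Iio ha hr (by positivity)) (by positivity)
  · exact mul_le_mul_of_nonneg_left
      (measureReal_gammaMeasure_Iio_le ha hr (by positivity)) (by positivity)

lemma tendsto_integral_measureReal_gammaMeasure_Iio_mul {β : Type*} [MeasurableSpace β]
    {ν : Measure β} (ha : 0 < a) (hr : 0 < r) {V : β → ℝ} (hV : Measurable V)
    (hV_nonneg : ∀ᵐ y ∂ν, 0 ≤ V y) (hV_int : Integrable (fun y => V y ^ a) ν) :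
    Tendsto (fun s => (s ^ a)⁻¹ * ∫ y, (gammaMeasure a r).real (Iio (V y * s)) ∂ν) (𝓝[>] 0)
      (𝓝 (∫ y, (r * V y) ^ a / Gamma (a + 1) ∂ν)) := by
  have := isProbabilityMeasure_gammaMeasure ha hr
  have hF : Measurable fun t => (gammaMeasure a r).real (Iio t) :=
    Monotone.measurable fun s t hst => measureReal_mono (Iio_subset_Iio hst)
  simp_rw [← integral_const_mul]
  refine tendsto_integral_filter_of_dominated_convergence
    (fun y => (r * V y) ^ a / Gamma (a + 1))
    (Eventually.of_forall fun s => ((hF.comp (hV.mul_const s)).const_mul _).aestronglyMeasurable)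
    ?_ ?_ (hV_nonneg.mono fun y hy => tendsto_measureReal_gammaMeasure_Iio_mul ha hr hy)
  · filter_upwards [self_mem_nhdsWithin] with s (hs : 0 < s)
    filter_upwards [hV_nonneg] with y hy
    rw [Real.norm_of_nonneg (by positivity), ← rpow_inv_mul_rpow_mul_mul_div _ hr.le hy hs,
      mul_comm (V y)]
    exact mul_le_mul_of_nonneg_left
      (measureReal_gammaMeasure_Iio_le ha hr (by positivity)) (by positivity)
  · refine ((hV_int.const_mul (r ^ a)).div_const (Gamma (a + 1))).congr ?_
    filter_upwards [hV_nonneg] with y hy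
    rw [mul_rpow hr.le hy]

end Gamma

section Exponential

variable {r : ℝ}

lemma expMeasure_eq_withDensity (r : ℝ) :
    expMeasure r = (volume.restrict (Ici 0)).withDensity fun x => .ofReal (r * exp (-(r * x))) := by
  rw [← withDensity_indicator measurableSet_Ici, expMeasure, gammaMeasure]
  congr 1
  ext x
  rw [show gammaPDF 1 r x = exponentialPDF r x from rfl, exponentialPDF_eq]
  by_cases hx : 0 ≤ x <;> simp [hx]

lemma integrable_expMeasure_iff (hr : 0 < r) {g : ℝ → ℝ} :
    Integrable g (expMeasure r) ↔ IntegrableOn (fun x => r * exp (-(r * x)) * g x) (Ioi 0) := by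
  rw [expMeasure_eq_withDensity, integrable_withDensity_iff_integrable_smul' (by fun_prop)
    (ae_of_all _ fun _ => ENNReal.ofReal_lt_top), ← integrableOn_Ici_iff_integrableOn_Ioi]
  simp_rw [smul_eq_mul, ENNReal.toReal_ofReal (by positivity : 0 ≤ r * exp _)]
  rfl

lemma integral_expMeasure (hr : 0 < r) (g : ℝ → ℝ) :
    ∫ x, g x ∂expMeasure r = ∫ x in Ioi 0, r * exp (-(r * x)) * g x := by
  rw [expMeasure_eq_withDensity, integral_withDensity_eq_integral_toReal_smul (by fun_prop)
    (ae_of_all _ fun _ => ENNReal.ofReal_lt_top), ← integral_Ici_eq_integral_Ioi]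
  simp_rw [smul_eq_mul, ENNReal.toReal_ofReal (by positivity : 0 ≤ r * exp _)]

lemma integrable_pow_expMeasure (hr : 0 < r) (k : ℕ) :
    Integrable (fun x => x ^ k) (expMeasure r) := by
  rw [integrable_expMeasure_iff hr]
  refine IntegrableOn.congr_fun ((integrableOn_rpow_mul_exp_neg_mul_rpow (s := k)
    (by linarith [k.cast_nonneg (α := ℝ)]) one_pos hr).const_mul r) (fun x _ => ?_)
    measurableSet_Ioi
  simp only [rpow_natCast, rpow_one, neg_mul]
  ring

lemma integral_pow_expMeasure (hr : 0 < r) (k : ℕ) :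
    ∫ x, x ^ k ∂expMeasure r = k.factorial / r ^ k := by
  have h := integral_rpow_mul_exp_neg_mul_Ioi (a := k + 1) (by positivity) hr
  simp only [add_sub_cancel_right, rpow_natCast, Gamma_nat_eq_factorial] at h
  rw [← Nat.cast_succ, rpow_natCast] at h
  rw [integral_expMeasure hr]
  simp_rw [mul_assoc, integral_const_mul, mul_comm (exp _), h]
  rw [one_div, inv_pow, pow_succ]
  field_simp

lemma integrable_add_one_pow_expMeasure (hr : 0 < r) (N : ℕ) :
    Integrable (fun x => (x + 1) ^ N) (expMeasure r) := by
  simp_rw [add_one_pow_eq_sum]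
  exact integrable_finsetSum _ fun n _ => (integrable_pow_expMeasure hr n).const_mul _

lemma integral_add_one_pow_div_factorial_expMeasure (hr : 0 < r) (N : ℕ) :
    ∫ x, (x + 1) ^ N / N.factorial ∂expMeasure r
      = ∑ n ∈ Finset.range (N + 1), (r ^ n)⁻¹ / (N - n).factorial := by
  simp_rw [integral_div, add_one_pow_eq_sum, integral_finsetSum _ fun n _ =>
    (integrable_pow_expMeasure hr n).const_mul _, integral_const_mul, integral_pow_expMeasure hr,
    Finset.sum_div]
  refine Finset.sum_congr rfl fun n hn => ?_
  have hfac : (N.choose n : ℝ) * n.factorial * (N - n).factorial = N.factorial := by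
    exact_mod_cast N.choose_mul_factorial_mul_factorial (Finset.mem_range_succ_iff.1 hn)
  have : r ^ n ≠ 0 := pow_ne_zero _ hr.ne'
  field_simp
  linear_combination hfac

end Exponential

lemma IndepFun.measureReal_lt_eq_integral {Ω β : Type*} [MeasurableSpace Ω] [MeasurableSpace β]
    {P : Measure Ω} [IsFiniteMeasure P] {μ : Measure ℝ} {ν : Measure β} {X : Ω → ℝ} {Y : Ω → β}
    (hXY : IndepFun X Y P) (hX : HasLaw X μ P) (hY : HasLaw Y ν P) {g : β → ℝ}
    (hg : Measurable g) :
    P.real {ω | X ω < g (Y ω)} = ∫ y, μ.real (Iio (g y)) ∂ν := by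
  have : IsFiniteMeasure μ := hX.map_eq ▸ inferInstance
  have : IsFiniteMeasure ν := hY.map_eq ▸ inferInstance
  have hlaw : HasLaw (fun ω => (X ω, Y ω)) (μ.prod ν) P :=
    ⟨hX.aemeasurable.prodMk hY.aemeasurable, by
      rw [hXY.map_prod_eq_prod_map_map hX.aemeasurable hY.aemeasurable, hX.map_eq, hY.map_eq]⟩
  have hS : MeasurableSet {p : ℝ × β | p.1 < g p.2} :=
    measurableSet_lt measurable_fst (hg.comp measurable_snd)
  have hmono : Monotone fun t => μ (Iio t) := fun s t hst => measure_mono (Iio_subset_Iio hst)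
  rw [hlaw.measureReal_eq (p := fun p => p.1 < g p.2) hS, measureReal_def,
    Measure.prod_apply_symm hS]
  exact (integral_toReal (hmono.measurable.comp hg).aemeasurable
    (ae_of_all _ fun _ => measure_lt_top _ _)).symm

end ProbabilityTheory

/-- High-SNR (small `s`) behavior of the first-hop SINR c.d.f. of the MRC/MRT scheme
(eq. (67) in the proof of Theorem 5): if `X ~ Gamma(N,1)` and `U ~ Exp(λ)` are independent,
then `s^{−N} · Prob(X < (U+1)s) → Σ_{n=0}^{N} λ^{−n}/(N−n)!` as `s → 0⁺`. -/
theorem cdf_first_hop_sinr_mrc_small_s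
    {Ω : Type*} [MeasureSpace Ω] [IsProbabilityMeasure (ℙ : Measure Ω)]
    (N : ℕ) (hN : 1 ≤ N) (lam : ℝ) (hlam : 0 < lam) (X U : Ω → ℝ)
    (hXU : IndepFun X U ℙ)
    (hX : Measure.map X ℙ = gammaMeasure N 1)
    (hU : Measure.map U ℙ = expMeasure lam) :
    Tendsto (fun s : ℝ => (s ^ N)⁻¹ * (ℙ {ω | X ω < (U ω + 1) * s}).toReal)
      (nhdsWithin 0 (Set.Ioi 0))
      (nhds (∑ n ∈ Finset.range (N + 1),
        (lam ^ n)⁻¹ / (Nat.factorial (N - n) : ℝ))) := by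
  have hNpos : (0 : ℝ) < N := by exact_mod_cast hN
  have hX_law : HasLaw X (gammaMeasure N 1) ℙ :=
    ⟨.of_map_ne_zero (hX ▸ (isProbabilityMeasure_gammaMeasure hNpos one_pos).ne_zero), hX⟩
  have hU_law : HasLaw U (expMeasure lam) ℙ :=
    ⟨.of_map_ne_zero (hU ▸ (isProbabilityMeasure_expMeasure hlam).ne_zero), hU⟩
  have hlim := tendsto_integral_measureReal_gammaMeasure_Iio_mul (ν := expMeasure lam) hNpos
    one_pos (V := fun u => u + 1) (by fun_prop)
    (ae_nonneg_gammaMeasure.mono fun u (hu : 0 ≤ u) => by linarith)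
    (by simpa only [rpow_natCast] using integrable_add_one_pow_expMeasure hlam N)
  simp only [rpow_natCast, one_mul, Gamma_nat_eq_factorial,
    integral_add_one_pow_div_factorial_expMeasure hlam N] at hlim
  refine hlim.congr fun s => ?_
  rw [← measureReal_def, hXU.measureReal_lt_eq_integral hX_law hU_law
    (by fun_prop : Measurable fun u => (u + 1) * s)]
end

section
/- Let N ≥ 1 be an integer, let i be an integer with 0 ≤ i ≤ N−1, and let A, B > 0 be reals with |1 − B/A| < 1. Then ∫_0^∞ e^{−(A−B)x} · x^{2N−i−2} · Γ(i−N+1, B·x) dx = B^{i+1−N} · A^{−N} · Γ(N)/(2N−i−1) · ₂F₁(1, N; 2N−i; 1 − B/A), where Γ(α,z) = ∫_z^∞ t^{α−1}e^{−t} dt (defined for any real α and z > 0). -/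
open MeasureTheory

/-- The Pochhammer symbol (rising factorial) `(x)_k = x(x+1)⋯(x+k−1)`. -/
noncomputable def poch (x : ℝ) (k : ℕ) : ℝ :=
  ∏ j ∈ Finset.range k, (x + (j : ℝ))

/-- The Gauss hypergeometric series `₂F₁(a,b;c;z) = Σ_k (a)_k (b)_k/((c)_k k!) z^k`. -/
noncomputable def hyp2F1 (a b c z : ℝ) : ℝ :=
  ∑' k : ℕ, poch a k * poch b k / (poch c k * (Nat.factorial k : ℝ)) * z ^ k

/-! With `a = i - N + 1`, write `Γ(a, Bx) = (Bx)^a ∫_1^∞ u^(a-1) e^(-Bxu) du` and integrate in `x`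
first (Fubini, everything being nonnegative): the integral becomes
`B^a Γ(N) ∫_1^∞ u^(a-1) (A - B + Bu)^(-N) du`. Factoring `A - B + Bu = Au (1 - z (1 - 1/u))` with
`z = 1 - B/A` and expanding `(1 - z (1 - 1/u))^(-N)` as a binomial series reduces this to the Beta
integrals `∫_1^∞ u^(-m-1) (1 - 1/u)^k du = k!/(m)_(k+1)`, `m = 2N - i - 1`, whose series is
`₂F₁(1, N; m + 1; z)/m`. -/

open Set

lemma poch_succ (x : ℝ) (k : ℕ) : poch x (k + 1) = poch x k * (x + k) :=
  Finset.prod_range_succ _ _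

lemma poch_succ' (x : ℝ) (k : ℕ) : poch x (k + 1) = x * poch (x + 1) k := by
  rw [poch, poch, Finset.prod_range_succ']
  push_cast
  simp only [add_zero, add_assoc, add_comm (1 : ℝ)]
  ring

lemma poch_pos {x : ℝ} (hx : 0 < x) (k : ℕ) : 0 < poch x k :=
  Finset.prod_pos fun j _ => by positivity

lemma poch_natCast (n k : ℕ) : poch n k = n.ascFactorial k := by
  rw [poch, Nat.ascFactorial_eq_prod_range]
  push_cast
  rfl

lemma poch_one (k : ℕ) : poch 1 k = k.factorial := by
  exact_mod_cast (poch_natCast 1 k).trans (congrArg _ (Nat.one_ascFactorial k))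

lemma poch_natCast_eq_choose_mul_factorial {n : ℕ} (hn : 0 < n) (k : ℕ) :
    poch n k = (k + (n - 1)).choose (n - 1) * k.factorial := by
  obtain ⟨m, rfl⟩ := Nat.exists_eq_add_of_lt hn
  rw [poch_natCast, zero_add, Nat.add_sub_cancel, Nat.ascFactorial_eq_factorial_mul_choose,
    add_comm k, Nat.choose_symm_add]
  push_cast
  ring

lemma factorial_le_poch {x : ℝ} (hx : 1 ≤ x) (k : ℕ) : (k.factorial : ℝ) ≤ poch x k := by
  rw [← poch_one]
  exact Finset.prod_le_prod (fun j _ => by positivity) fun j _ => by linarith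

lemma upperGamma_eq_rpow_mul_integral_Ioi_one (a : ℝ) {c : ℝ} (hc : 0 < c) :
    upperGamma a c = c ^ a * ∫ u in Ioi (1 : ℝ), u ^ (a - 1) * Real.exp (-(c * u)) := by
  have hscale := integral_comp_mul_left_Ioi (fun t => t ^ (a - 1) * Real.exp (-t)) 1 hc
  rw [mul_one, smul_eq_mul, ← upperGamma] at hscale
  have hsplit : ∫ u in Ioi (1 : ℝ), (c * u) ^ (a - 1) * Real.exp (-(c * u)) =
      c ^ (a - 1) * ∫ u in Ioi (1 : ℝ), u ^ (a - 1) * Real.exp (-(c * u)) := by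
    rw [← integral_const_mul]
    refine setIntegral_congr_fun measurableSet_Ioi fun u (hu : 1 < u) => ?_
    rw [Real.mul_rpow hc.le (by linarith)]
    ring
  calc upperGamma a c = c * (c⁻¹ * upperGamma a c) := (mul_inv_cancel_left₀ hc.ne' _).symm
    _ = c ^ a * ∫ u in Ioi (1 : ℝ), u ^ (a - 1) * Real.exp (-(c * u)) := by
      rw [← hscale, hsplit, ← mul_assoc, mul_comm c, ← Real.rpow_add_one hc.ne', sub_add_cancel]

lemma integrableOn_Ioi_one_rpow_mul_rpow_neg {A B a p : ℝ} (hA : 0 < A) (hB : 0 < B)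
    (hp : 0 ≤ p) (hap : a < p) :
    IntegrableOn (fun u : ℝ => u ^ (a - 1) * (A - B + B * u) ^ (-p)) (Ioi 1) := by
  have hmin : 0 < min A B := lt_min hA hB
  refine ((integrableOn_Ioi_rpow_of_lt (by linarith : a - 1 - p < -1) one_pos).const_mul
    (min A B ^ (-p))).mono' (by fun_prop) ?_
  filter_upwards [ae_restrict_mem measurableSet_Ioi] with u (hu : 1 < u)
  have hu0 : 0 < u := one_pos.trans hu
  have hlow : min A B * u ≤ A - B + B * u := by
    rcases le_total A B with h | h
    · rw [min_eq_left h]; nlinarith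
    · rw [min_eq_right h]; nlinarith
  have hlow_pos : 0 < min A B * u := by positivity
  rw [Real.norm_of_nonneg
    (mul_nonneg (by positivity) (Real.rpow_nonneg (hlow_pos.trans_le hlow).le _))]
  calc u ^ (a - 1) * (A - B + B * u) ^ (-p)
      ≤ u ^ (a - 1) * (min A B * u) ^ (-p) :=
        mul_le_mul_of_nonneg_left (Real.rpow_le_rpow_of_nonpos hlow_pos hlow (by linarith))
          (by positivity)
    _ = min A B ^ (-p) * u ^ (a - 1 - p) := by
        rw [Real.mul_rpow hmin.le hu0.le, sub_eq_add_neg (a - 1), Real.rpow_add hu0]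
        ring

theorem integral_exp_mul_rpow_mul_upperGamma {A B a p : ℝ} (hA : 0 < A) (hB : 0 < B)
    (hp : 0 < p) (hap : a < p) :
    ∫ x in Ioi (0 : ℝ), Real.exp (-(A - B) * x) * x ^ (p - a - 1) * upperGamma a (B * x) =
      B ^ a * Real.Gamma p * ∫ u in Ioi (1 : ℝ), u ^ (a - 1) * (A - B + B * u) ^ (-p) := by
  set g : ℝ → ℝ → ℝ := fun x u => B ^ a * u ^ (a - 1) *
    (x ^ (p - 1) * Real.exp (-((A - B + B * u) * x))) with hg
  have hc : ∀ u : ℝ, 1 < u → 0 < A - B + B * u := fun u hu => by nlinarith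
  have h_inner_u : ∀ x ∈ Ioi (0 : ℝ),
      Real.exp (-(A - B) * x) * x ^ (p - a - 1) * upperGamma a (B * x) =
        ∫ u in Ioi (1 : ℝ), g x u := by
    intro x (hx : 0 < x)
    rw [upperGamma_eq_rpow_mul_integral_Ioi_one a (mul_pos hB hx), ← integral_const_mul,
      ← integral_const_mul]
    refine setIntegral_congr_fun measurableSet_Ioi fun u _ => ?_
    have hx_pow : x ^ (p - 1) = x ^ (p - a - 1) * x ^ a := by
      rw [← Real.rpow_add hx]; ring_nf
    have hexp : Real.exp (-((A - B + B * u) * x)) =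
        Real.exp (-(A - B) * x) * Real.exp (-(B * x * u)) := by
      rw [← Real.exp_add]; ring_nf
    simp only [hg]
    rw [hx_pow, hexp, Real.mul_rpow hB.le hx.le]
    ring
  have h_inner_x : ∀ u ∈ Ioi (1 : ℝ),
      ∫ x in Ioi (0 : ℝ), g x u =
        B ^ a * Real.Gamma p * (u ^ (a - 1) * (A - B + B * u) ^ (-p)) := by
    intro u hu
    rw [integral_const_mul, Real.integral_rpow_mul_exp_neg_mul_Ioi hp (hc u hu),
      one_div, Real.inv_rpow (hc u hu).le, ← Real.rpow_neg (hc u hu).le]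
    ring
  have hg_nonneg : ∀ x ∈ Ioi (0 : ℝ), ∀ u ∈ Ioi (1 : ℝ), 0 ≤ g x u := by
    intro x (hx : 0 < x) u (hu : 1 < u)
    have : 0 < u := one_pos.trans hu
    positivity
  have hg_int : Integrable (Function.uncurry g)
      ((volume.restrict (Ioi 0)).prod (volume.restrict (Ioi 1))) := by
    refine (integrable_prod_iff' (by rw [hg]; fun_prop)).2 ⟨?_, ?_⟩
    · filter_upwards [ae_restrict_mem measurableSet_Ioi] with u hu
      refine Integrable.of_integral_ne_zero ?_
      change (∫ x in Ioi (0 : ℝ), g x u) ≠ 0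
      rw [h_inner_x u hu]
      have := hc u hu
      have : 0 < u := one_pos.trans hu
      have := Real.Gamma_pos_of_pos hp
      positivity
    · refine IntegrableOn.congr_fun
        ((integrableOn_Ioi_one_rpow_mul_rpow_neg hA hB hp.le hap).const_mul (B ^ a * Real.Gamma p))
        (fun u hu => ?_) measurableSet_Ioi
      rw [← h_inner_x u hu]
      refine setIntegral_congr_fun measurableSet_Ioi fun x hx => ?_
      exact (Real.norm_of_nonneg (hg_nonneg x hx u hu)).symm
  calc _ = ∫ x in Ioi (0 : ℝ), ∫ u in Ioi (1 : ℝ), g x u :=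
        setIntegral_congr_fun measurableSet_Ioi h_inner_u
    _ = ∫ u in Ioi (1 : ℝ), ∫ x in Ioi (0 : ℝ), g x u := integral_integral_swap hg_int
    _ = ∫ u in Ioi (1 : ℝ), B ^ a * Real.Gamma p * (u ^ (a - 1) * (A - B + B * u) ^ (-p)) :=
        setIntegral_congr_fun measurableSet_Ioi h_inner_x
    _ = _ := integral_const_mul _ _

lemma integrableOn_Ioi_one_rpow_mul_one_sub_inv_pow {s : ℝ} (hs : s < -1) (k : ℕ) :
    IntegrableOn (fun u : ℝ => u ^ s * (1 - u⁻¹) ^ k) (Ioi 1) := by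
  refine (integrableOn_Ioi_rpow_of_lt hs one_pos).mono' (by fun_prop) ?_
  filter_upwards [ae_restrict_mem measurableSet_Ioi] with u (hu : 1 < u)
  have h0 : 0 ≤ 1 - u⁻¹ := sub_nonneg.2 (inv_le_one_of_one_le₀ hu.le)
  rw [Real.norm_of_nonneg (by positivity)]
  exact mul_le_of_le_one_right (by positivity)
    (pow_le_one₀ h0 (sub_le_self _ (by positivity)))

lemma integral_Ioi_one_rpow_mul_one_sub_inv_pow {m : ℝ} (hm : 0 < m) (k : ℕ) :
    ∫ u in Ioi (1 : ℝ), u ^ (-m - 1) * (1 - u⁻¹) ^ k = k.factorial / poch m (k + 1) := by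
  induction k generalizing m with
  | zero =>
    rw [poch_succ', poch, Finset.prod_range_zero]
    simp only [pow_zero, mul_one, Nat.factorial_zero, Nat.cast_one]
    rw [integral_Ioi_rpow_of_lt (by linarith) one_pos, Real.one_rpow, sub_add_cancel]
    field_simp
  | succ k ih =>
    have hsplit : EqOn (fun u : ℝ => u ^ (-m - 1) * (1 - u⁻¹) ^ (k + 1))
        (fun u => u ^ (-m - 1) * (1 - u⁻¹) ^ k - u ^ (-(m + 1) - 1) * (1 - u⁻¹) ^ k) (Ioi 1) := by
      intro u (hu : 1 < u)
      have hu0 : 0 < u := one_pos.trans hu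
      dsimp only
      rw [show -(m + 1) - 1 = (-m - 1) + -1 by ring, Real.rpow_add hu0, Real.rpow_neg_one]
      ring
    rw [setIntegral_congr_fun measurableSet_Ioi hsplit,
      integral_sub (integrableOn_Ioi_one_rpow_mul_one_sub_inv_pow (by linarith) k)
        (integrableOn_Ioi_one_rpow_mul_one_sub_inv_pow (by linarith) k),
      ih hm, ih (by linarith), poch_succ', poch_succ' m, poch_succ (m + 1)]
    have := poch_pos (by linarith : 0 < m + 1) k
    push_cast [Nat.factorial_succ]
    field_simp
    ring

theorem integral_Ioi_one_rpow_mul_one_sub_mul_rpow_neg_eq_hyp2F1 {n : ℕ} (hn : 0 < n) {m z : ℝ}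
    (hm : 0 < m) (hz : |z| < 1) :
    ∫ u in Ioi (1 : ℝ), u ^ (-m - 1) * (1 - z * (1 - u⁻¹)) ^ (-(n : ℝ)) =
      hyp2F1 1 n (m + 1) z / m := by
  set c : ℕ → ℝ := fun k => ((k + (n - 1)).choose (n - 1) : ℝ) * z ^ k with hc
  set F : ℕ → ℝ → ℝ := fun k u => c k * (u ^ (-m - 1) * (1 - u⁻¹) ^ k)
  have hF_nonneg : ∀ k, ∀ u ∈ Ioi (1 : ℝ), 0 ≤ u ^ (-m - 1) * (1 - u⁻¹) ^ k := by
    intro k u (hu : 1 < u)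
    have := inv_le_one_of_one_le₀ hu.le
    have : 0 < u := one_pos.trans hu
    exact mul_nonneg (by positivity) (pow_nonneg (by linarith) _)
  have h_hasSum : ∀ u ∈ Ioi (1 : ℝ),
      HasSum (fun k => F k u) (u ^ (-m - 1) * (1 - z * (1 - u⁻¹)) ^ (-(n : ℝ))) := by
    intro u (hu : 1 < u)
    have hv : |1 - u⁻¹| ≤ 1 := by
      have := inv_le_one_of_one_le₀ hu.le
      have : 0 < u⁻¹ := by positivity
      rw [abs_le]; constructor <;> linarith
    have hw : ‖z * (1 - u⁻¹)‖ < 1 := by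
      rw [Real.norm_eq_abs, abs_mul]
      nlinarith [abs_nonneg z, abs_nonneg (1 - u⁻¹)]
    have hw' : 0 < 1 - z * (1 - u⁻¹) := by
      linarith [(abs_lt.1 (Real.norm_eq_abs _ ▸ hw)).2]
    have := (hasSum_choose_mul_geometric_of_norm_lt_one (n - 1) hw).mul_left (u ^ (-m - 1))
    rw [Nat.sub_add_cancel hn] at this
    have hterms : (fun k => F k u) =
        fun k => u ^ (-m - 1) * ((k + (n - 1)).choose (n - 1) * (z * (1 - u⁻¹)) ^ k) := by
      funext k
      simp only [F, c, mul_pow]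
      ring
    rw [one_div] at this
    rwa [hterms, Real.rpow_neg hw'.le, Real.rpow_natCast]
  have h_int : ∀ k, IntegrableOn (F k) (Ioi 1) := fun k =>
    (integrableOn_Ioi_one_rpow_mul_one_sub_inv_pow (by linarith) k).const_mul _
  have h_integral : ∀ k, ∫ u in Ioi (1 : ℝ), F k u = c k * (k.factorial / poch m (k + 1)) :=
    fun k => by rw [integral_const_mul, integral_Ioi_one_rpow_mul_one_sub_inv_pow hm]
  have h_integral_norm : ∀ k,
      ∫ u in Ioi (1 : ℝ), ‖F k u‖ = |c k| * (k.factorial / poch m (k + 1)) := by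
    intro k
    rw [← integral_Ioi_one_rpow_mul_one_sub_inv_pow hm, ← integral_const_mul]
    refine setIntegral_congr_fun measurableSet_Ioi fun u hu => ?_
    rw [norm_mul, Real.norm_eq_abs, Real.norm_of_nonneg (hF_nonneg k u hu)]
  have h_summable : Summable fun k => ∫ u in Ioi (1 : ℝ), ‖F k u‖ := by
    have hc_abs : Summable fun k => |c k| := by
      simpa [hc, abs_mul, abs_pow] using
        summable_choose_mul_geometric_of_norm_lt_one (n - 1) (r := |z|) (by simpa using hz)
    refine Summable.of_nonneg_of_le (fun k => integral_nonneg fun u => norm_nonneg _)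
      (fun k => ?_) (hc_abs.div_const m)
    have h_beta_le : (k.factorial : ℝ) / poch m (k + 1) ≤ 1 / m := by
      rw [poch_succ', mul_comm, ← div_div]
      exact div_le_div_of_nonneg_right
        (div_le_one_of_le₀ (factorial_le_poch (by linarith) k) (poch_pos (by linarith) k).le) hm.le
    rw [h_integral_norm, div_eq_mul_one_div (|c k|) m]
    exact mul_le_mul_of_nonneg_left h_beta_le (abs_nonneg _)
  calc _ = ∫ u in Ioi (1 : ℝ), ∑' k, F k u :=
        setIntegral_congr_fun measurableSet_Ioi fun u hu => (h_hasSum u hu).tsum_eq.symm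
    _ = ∑' k, c k * (k.factorial / poch m (k + 1)) := by
        rw [← integral_tsum_of_summable_integral_norm h_int h_summable]
        exact tsum_congr h_integral
    _ = _ := by
        rw [hyp2F1, ← tsum_div_const]
        refine tsum_congr fun k => ?_
        have := poch_pos (by linarith : 0 < m + 1) k
        rw [hc, poch_one, poch_natCast_eq_choose_mul_factorial hn, poch_succ']
        field_simp

lemma integral_Ioi_one_rpow_mul_rpow_neg_eq_hyp2F1 {A B a : ℝ} {n : ℕ} (hA : 0 < A)
    (hn : 0 < n) (ha : a < n) (hAB : |1 - B / A| < 1) :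
    ∫ u in Ioi (1 : ℝ), u ^ (a - 1) * (A - B + B * u) ^ (-(n : ℝ)) =
      A ^ (-(n : ℝ)) * (hyp2F1 1 n (n - a + 1) (1 - B / A) / (n - a)) := by
  have hfactor : EqOn (fun u : ℝ => u ^ (a - 1) * (A - B + B * u) ^ (-(n : ℝ)))
      (fun u => A ^ (-(n : ℝ)) *
        (u ^ (-(n - a) - 1) * (1 - (1 - B / A) * (1 - u⁻¹)) ^ (-(n : ℝ)))) (Ioi 1) := by
    intro u (hu : 1 < u)
    have hu0 : 0 < u := one_pos.trans hu
    have hw : 0 < 1 - (1 - B / A) * (1 - u⁻¹) := by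
      have : 0 < 1 - u⁻¹ := sub_pos.2 (inv_lt_one_of_one_lt₀ hu)
      have : 1 - u⁻¹ < 1 := sub_lt_self _ (by positivity)
      nlinarith [abs_lt.1 hAB]
    have hsplit : A - B + B * u = A * u * (1 - (1 - B / A) * (1 - u⁻¹)) := by
      field_simp
      ring
    dsimp only
    rw [hsplit, Real.mul_rpow (by positivity) hw.le, Real.mul_rpow hA.le hu0.le,
      show -(n - a) - 1 = (a - 1) + -(n : ℝ) by ring, Real.rpow_add hu0]
    ring
  rw [setIntegral_congr_fun measurableSet_Ioi hfactor, integral_const_mul,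
    integral_Ioi_one_rpow_mul_one_sub_mul_rpow_neg_eq_hyp2F1 hn (by linarith) hAB, sub_add_eq_add_sub]

/-- The integral `I₁` evaluated in the proof of Theorem 5 (eq. (69)): for `0 ≤ i ≤ N−1` and
`A, B > 0` with `|1 − B/A| < 1`,
`∫_0^∞ e^{−(A−B)x} x^{2N−i−2} Γ(i−N+1, Bx) dx
  = B^{i+1−N} A^{−N} Γ(N)/(2N−i−1) · ₂F₁(1, N; 2N−i; 1 − B/A)`. -/
theorem integral_incGamma_hyp2F1
    (N : ℕ) (hN : 1 ≤ N) (i : ℕ) (hi : i ≤ N - 1)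
    (A B : ℝ) (hA : 0 < A) (hB : 0 < B) (hAB : |1 - B / A| < 1) :
    (∫ x in Set.Ioi (0 : ℝ),
        Real.exp (-(A - B) * x) * x ^ (2 * (N : ℝ) - (i : ℝ) - 2) *
          upperGamma ((i : ℝ) - (N : ℝ) + 1) (B * x)) =
      B ^ ((i : ℝ) + 1 - (N : ℝ)) * A ^ (-(N : ℝ)) * Real.Gamma N /
          (2 * (N : ℝ) - (i : ℝ) - 1) *
        hyp2F1 1 N (2 * (N : ℝ) - (i : ℝ)) (1 - B / A) := by
  have hiN : (i : ℝ) + 1 ≤ N := by exact_mod_cast (by omega : i + 1 ≤ N)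
  have hN0 : (0 : ℝ) < N := by exact_mod_cast hN
  have ha : (i : ℝ) - N + 1 < N := by linarith
  have h := integral_exp_mul_rpow_mul_upperGamma hA hB hN0 ha
  rw [integral_Ioi_one_rpow_mul_rpow_neg_eq_hyp2F1 hA hN ha hAB,
    show (N : ℝ) - ((i : ℝ) - N + 1) - 1 = 2 * N - i - 2 by ring] at h
  rw [h, show (N : ℝ) - ((i : ℝ) - N + 1) = 2 * N - i - 1 by ring,
    show (i : ℝ) - N + 1 = i + 1 - N by ring, sub_add_cancel]
  ring
end

section
/- Let N ≥ 1 be an integer and let X, Y, Z be mutually independent random variables each with the Gamma(N,1) distribution. Let a, b, κ, γ > 0 with a ≠ b. Then lim_{ρ→∞} ρ^N · Prob( κ·ρ·(a·X + b·Y)·Z < γ ) = (γ/κ)^N · E[ (a·X + b·Y)^{−N} ] / Γ(N+1), and the expectation E[(aX+bY)^{−N}] is finite. -/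
/-!
Conditioning on `W = aX + bY`, which is independent of `Z`, gives
`P(κρWZ < γ) = E[F(γ / (κρW))]`, where `F` is the `Gamma(N,1)` distribution function.
Since `e^{-t} t^N / Γ(N+1) ≤ F(t) ≤ t^N / Γ(N+1)`, the quantity `ρ^N F(γ / (κρW))` tends to
`(γ/κ)^N W^{-N} / Γ(N+1)` and is dominated by that same limit, so dominated convergence
applies once `W^{-N}` is integrable. That follows from AM-GM,
`W^{-N} ≤ (ab)^{-N/2} X^{-N/2} Y^{-N/2}`: the right side is a product of independent factors,
each integrable because `E[X^{-s}] < ∞` for `s < N`.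
-/

open MeasureTheory ProbabilityTheory Filter

namespace ProbabilityTheory

open Set Real Topology

variable {α r : ℝ}

lemma measurable_gammaPDF : Measurable (gammaPDF α r) :=
  (measurable_gammaPDFReal α r).ennreal_ofReal

lemma ae_pos_gammaMeasure : ∀ᵐ x ∂gammaMeasure α r, 0 < x := by
  rw [gammaMeasure, ae_withDensity_iff measurable_gammaPDF]
  filter_upwards [Measure.ae_ne volume 0] with x hx0 hx
  exact lt_of_le_of_ne (not_lt.1 fun hneg => hx (gammaPDF_of_neg hneg)) hx0.symm

lemma measureReal_Iio_gammaMeasure (hα : 0 < α) (hr : 0 < r) (t : ℝ) :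
    (gammaMeasure α r).real (Iio t) = cdf (gammaMeasure α r) t := by
  have := isProbabilityMeasure_gammaMeasure hα hr
  rw [cdf_eq_real]
  exact measureReal_congr ((withDensity_absolutelyContinuous _ _).ae_eq Iio_ae_eq_Iic)

lemma cdf_gammaMeasure_eq_intervalIntegral (hα : 0 < α) {t : ℝ} (ht : 0 ≤ t) :
    cdf (gammaMeasure α 1) t = ∫ x in 0..t, x ^ (α - 1) * (exp (-x) / Gamma α) := by
  rw [cdf_gammaMeasure_eq_integral hα one_pos, intervalIntegral.integral_of_le ht,
    ← integral_Icc_eq_integral_Ioc,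
    setIntegral_eq_of_subset_of_forall_sdiff_eq_zero (f := gammaPDFReal α 1) measurableSet_Iic
      Icc_subset_Iic_self fun x hx => if_neg fun h => hx.2 ⟨h, hx.1⟩]
  refine setIntegral_congr_fun measurableSet_Icc fun x hx => ?_
  simp only [gammaPDFReal, if_pos hx.1, one_rpow, one_mul]
  ring

lemma integral_rpow_sub_one_mul_div_Gamma (hα : 0 < α) (t c : ℝ) :
    ∫ x in 0..t, x ^ (α - 1) * (c / Gamma α) = c * t ^ α / Gamma (α + 1) := by
  rw [intervalIntegral.integral_mul_const, integral_rpow (Or.inl (by linarith)),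
    sub_add_cancel, zero_rpow hα.ne', Gamma_add_one hα.ne']
  field_simp
  ring

lemma intervalIntegrable_rpow_sub_one_mul (hα : 0 < α) {g : ℝ → ℝ} (hg : Continuous g) (t : ℝ) :
    IntervalIntegrable (fun x => x ^ (α - 1) * g x) volume 0 t :=
  (intervalIntegral.intervalIntegrable_rpow' (by linarith)).mul_continuousOn hg.continuousOn

lemma cdf_gammaMeasure_le (hα : 0 < α) {t : ℝ} (ht : 0 ≤ t) :
    cdf (gammaMeasure α 1) t ≤ t ^ α / Gamma (α + 1) := by
  rw [cdf_gammaMeasure_eq_intervalIntegral hα ht, ← one_mul (t ^ α),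
    ← integral_rpow_sub_one_mul_div_Gamma hα t]
  refine intervalIntegral.integral_mono_on ht
    (intervalIntegrable_rpow_sub_one_mul hα (by fun_prop) t)
    (intervalIntegrable_rpow_sub_one_mul hα continuous_const t) fun x hx => ?_
  have := (Gamma_pos_of_pos hα).le
  gcongr
  · exact rpow_nonneg hx.1 _
  · exact exp_le_one_iff.2 (by linarith [hx.1])

lemma exp_neg_mul_rpow_div_le_cdf_gammaMeasure (hα : 0 < α) {t : ℝ} (ht : 0 ≤ t) :
    exp (-t) * t ^ α / Gamma (α + 1) ≤ cdf (gammaMeasure α 1) t := by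
  rw [cdf_gammaMeasure_eq_intervalIntegral hα ht, ← integral_rpow_sub_one_mul_div_Gamma hα t]
  refine intervalIntegral.integral_mono_on ht
    (intervalIntegrable_rpow_sub_one_mul hα continuous_const t)
    (intervalIntegrable_rpow_sub_one_mul hα (by fun_prop) t) fun x hx => ?_
  have := (Gamma_pos_of_pos hα).le
  gcongr
  · exact rpow_nonneg hx.1 _
  · exact hx.2

lemma tendsto_cdf_gammaMeasure_div_rpow (hα : 0 < α) :
    Tendsto (fun t => cdf (gammaMeasure α 1) t / t ^ α) (𝓝[>] 0) (𝓝 (Gamma (α + 1))⁻¹) := by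
  have hlower : Tendsto (fun t => exp (-t) * (Gamma (α + 1))⁻¹) (𝓝[>] 0)
      (𝓝 (Gamma (α + 1))⁻¹) := by
    have : Continuous fun t => exp (-t) * (Gamma (α + 1))⁻¹ := by fun_prop
    simpa using (this.tendsto 0).mono_left nhdsWithin_le_nhds
  refine tendsto_of_tendsto_of_tendsto_of_le_of_le' hlower tendsto_const_nhds ?_ ?_ <;>
    filter_upwards [self_mem_nhdsWithin] with t (ht : 0 < t)
  · rw [le_div_iff₀ (rpow_pos_of_pos ht α)]
    simpa [div_eq_mul_inv, mul_right_comm] using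
      exp_neg_mul_rpow_div_le_cdf_gammaMeasure hα ht.le
  · rw [div_le_iff₀ (rpow_pos_of_pos ht α), inv_mul_eq_div]
    exact cdf_gammaMeasure_le hα ht.le

lemma integrable_rpow_neg_gammaMeasure (hα : 0 < α) {s : ℝ} (hs : s < α) :
    Integrable (fun x => x ^ (-s)) (gammaMeasure α 1) := by
  rw [gammaMeasure, integrable_withDensity_iff measurable_gammaPDF
    (ae_of_all _ fun _ => ENNReal.ofReal_lt_top)]
  simp only [gammaPDF, ENNReal.toReal_ofReal (gammaPDFReal_nonneg hα one_pos _)]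
  rw [← integrableOn_univ, ← Iio_union_Ici (a := 0), integrableOn_union,
    integrableOn_Ici_iff_integrableOn_Ioi]
  constructor
  · exact integrableOn_zero.congr_fun (fun x (hx : x < 0) => by simp [gammaPDFReal, not_le.2 hx])
      measurableSet_Iio
  · refine IntegrableOn.congr_fun ((GammaIntegral_convergent (sub_pos.2 hs)).const_mul (Gamma α)⁻¹)
      (fun x (hx : 0 < x) => ?_) measurableSet_Ioi
    simp only [gammaPDFReal, if_pos hx.le, one_rpow, one_mul]
    rw [sub_sub, add_comm s, ← sub_sub, rpow_sub hx, rpow_neg hx.le]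
    field_simp

lemma zpow_neg_add_le_rpow_mul {a b x y : ℝ} (n : ℕ) (ha : 0 < a) (hb : 0 < b) (hx : 0 < x)
    (hy : 0 < y) :
    (a * x + b * y) ^ (-(n : ℤ)) ≤
      (a * b) ^ (-(n / 2 : ℝ)) * (x ^ (-(n / 2 : ℝ)) * y ^ (-(n / 2 : ℝ))) := by
  have amgm : (a * x) ^ (1 / 2 : ℝ) * (b * y) ^ (1 / 2 : ℝ) ≤ a * x + b * y := by
    have := Real.geom_mean_le_arith_mean2_weighted (w₁ := 1 / 2) (w₂ := 1 / 2)
      (by norm_num) (by norm_num) (mul_pos ha hx).le (mul_pos hb hy).le (by norm_num)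
    nlinarith [mul_pos ha hx, mul_pos hb hy]
  calc (a * x + b * y) ^ (-(n : ℤ))
      = (a * x + b * y) ^ (-(n : ℝ)) := by rw [← rpow_intCast]; push_cast; rfl
    _ ≤ ((a * x) ^ (1 / 2 : ℝ) * (b * y) ^ (1 / 2 : ℝ)) ^ (-(n : ℝ)) :=
        rpow_le_rpow_of_nonpos (by positivity) amgm (by simp)
    _ = (a * b) ^ (-(n / 2 : ℝ)) * (x ^ (-(n / 2 : ℝ)) * y ^ (-(n / 2 : ℝ))) := by
        rw [mul_rpow (by positivity) (by positivity), ← rpow_mul (by positivity),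
          ← rpow_mul (by positivity), mul_rpow ha.le hx.le, mul_rpow hb.le hy.le,
          mul_rpow ha.le hb.le]
        ring_nf

section

variable {Ω : Type*} [MeasurableSpace Ω] {P : Measure Ω} {W Z : Ω → ℝ}

lemma measureReal_mul_lt_eq_integral [IsFiniteMeasure P] (hW : AEMeasurable W P)
    (hZ : AEMeasurable Z P) (hWZ : IndepFun W Z P) (hWpos : ∀ᵐ ω ∂P, 0 < W ω) (s : ℝ) :
    P.real {ω | W ω * Z ω < s} = ∫ ω, (P.map Z).real (Iio (s / W ω)) ∂P := by
  have hS : MeasurableSet {p : ℝ × ℝ | p.1 * p.2 < s} :=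
    measurableSet_lt (by fun_prop) (by fun_prop)
  have hslice : Measurable fun w => P.map Z (Prod.mk w ⁻¹' {p : ℝ × ℝ | p.1 * p.2 < s}) :=
    measurable_measure_prodMk_left hS
  have hlaw : P {ω | W ω * Z ω < s} = ∫⁻ ω, P.map Z {z | W ω * z < s} ∂P := by
    change P ((fun ω => (W ω, Z ω)) ⁻¹' {p | p.1 * p.2 < s}) = _
    rw [← Measure.map_apply_of_aemeasurable (hW.prodMk hZ) hS,
      (indepFun_iff_map_prod_eq_prod_map_map hW hZ).1 hWZ, Measure.prod_apply hS,
      lintegral_map' hslice.aemeasurable hW]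
    rfl
  have hslice_comp : AEMeasurable (fun ω => P.map Z {z | W ω * z < s}) P :=
    hslice.comp_aemeasurable hW
  rw [measureReal_def, hlaw,
    ← integral_toReal hslice_comp (ae_of_all _ fun _ => measure_lt_top _ _)]
  refine integral_congr_ae ?_
  filter_upwards [hWpos] with ω hω
  simp only [measureReal_def, Iio, lt_div_iff₀' hω]

lemma IndepFun.integrable_zpow_neg_linearComb {X Y : Ω → ℝ} (n : ℕ) {a b : ℝ} (ha : 0 < a)
    (hb : 0 < b) (hXY : IndepFun X Y P) (hX : AEMeasurable X P) (hY : AEMeasurable Y P)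
    (hXpos : ∀ᵐ ω ∂P, 0 < X ω) (hYpos : ∀ᵐ ω ∂P, 0 < Y ω)
    (hiX : Integrable (fun ω => X ω ^ (-(n / 2 : ℝ))) P)
    (hiY : Integrable (fun ω => Y ω ^ (-(n / 2 : ℝ))) P) :
    Integrable (fun ω => (a * X ω + b * Y ω) ^ (-(n : ℤ))) P := by
  have hprod := (hXY.comp (measurable_id.pow_const (-(n / 2 : ℝ)))
    (measurable_id.pow_const (-(n / 2 : ℝ)))).integrable_mul hiX hiY
  refine (hprod.const_mul ((a * b) ^ (-(n / 2 : ℝ)))).mono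
    (((hX.const_mul a).add (hY.const_mul b)).pow_const _).aestronglyMeasurable ?_
  filter_upwards [hXpos, hYpos] with ω hx hy
  simp only [Pi.mul_apply, Function.comp_apply]
  rw [Real.norm_of_nonneg (by positivity), Real.norm_of_nonneg (by positivity)]
  exact zpow_neg_add_le_rpow_mul n ha hb hx hy

lemma tendsto_integral_mul_comp_div_atTop {f V : Ω → ℝ} {g : ℝ → ℝ} {C L : ℝ}
    (hf : Integrable f P) (hV : AEMeasurable V P) (hVpos : ∀ᵐ ω ∂P, 0 < V ω)
    (hg : Measurable g) (hg_bdd : ∀ t, 0 < t → ‖g t‖ ≤ C)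
    (hg_lim : Tendsto g (𝓝[>] 0) (𝓝 L)) :
    Tendsto (fun ρ => ∫ ω, f ω * g (V ω / ρ) ∂P) atTop (𝓝 ((∫ ω, f ω ∂P) * L)) := by
  rw [← integral_mul_const]
  refine tendsto_integral_filter_of_dominated_convergence (fun ω => ‖f ω‖ * C)
    (Eventually.of_forall fun ρ => ?_) ?_ (hf.norm.mul_const C) ?_
  · exact hf.aestronglyMeasurable.mul
      (hg.comp_aemeasurable (hV.div_const ρ)).aestronglyMeasurable
  · filter_upwards [eventually_gt_atTop 0] with ρ hρ
    filter_upwards [hVpos] with ω hω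
    rw [norm_mul]
    exact mul_le_mul_of_nonneg_left (hg_bdd _ (by positivity)) (norm_nonneg _)
  · filter_upwards [hVpos] with ω hω
    refine (hg_lim.comp (tendsto_nhdsWithin_iff.2 ⟨tendsto_const_nhds.div_atTop tendsto_id, ?_⟩))
      |>.const_mul (f ω)
    filter_upwards [eventually_gt_atTop 0] with ρ hρ
    exact mem_Ioi.2 (by positivity)

lemma tendsto_pow_mul_measureReal_mul_lt [IsFiniteMeasure P] {ν : Measure ℝ} {n : ℕ}
    {C L c s : ℝ} (hW : AEMeasurable W P) (hZ : AEMeasurable Z P) (hWZ : IndepFun W Z P)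
    (hZν : P.map Z = ν) (hWpos : ∀ᵐ ω ∂P, 0 < W ω) (hWint : Integrable (fun ω => W ω ^ (-(n : ℤ))) P)
    (hν_le : ∀ t, 0 < t → ν.real (Iio t) ≤ C * t ^ n)
    (hν_lim : Tendsto (fun t => ν.real (Iio t) / t ^ n) (𝓝[>] 0) (𝓝 L))
    (hc : 0 < c) (hs : 0 < s) :
    Tendsto (fun ρ => ρ ^ n * P.real {ω | c * ρ * W ω * Z ω < s}) atTop
      (𝓝 ((s / c) ^ n * L * ∫ ω, W ω ^ (-(n : ℤ)) ∂P)) := by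
  subst hZν
  set F : ℝ → ℝ := fun t => (P.map Z).real (Iio t)
  set g : ℝ → ℝ := fun t => F t / t ^ n
  have hg_meas : Measurable g := by
    have : Monotone F := fun _ _ h => measureReal_mono (Iio_subset_Iio h)
    exact this.measurable.div (by fun_prop)
  have hg_bdd : ∀ t, 0 < t → ‖g t‖ ≤ C := fun t ht => by
    rw [Real.norm_of_nonneg (div_nonneg measureReal_nonneg (by positivity)),
      div_le_iff₀ (by positivity)]
    exact hν_le t ht
  have hscale : ∀ ρ w, 0 < ρ → 0 < w →
      ρ ^ n * F (s / (c * ρ * w)) = (s / c) ^ n * w ^ (-(n : ℤ)) * g (s / (c * w) / ρ) := by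
    intro ρ w hρ hw
    rw [div_div, mul_right_comm]
    simp only [g, zpow_neg, zpow_natCast, div_pow, mul_pow]
    field_simp
  have hrepr : (fun ρ => ∫ ω, (s / c) ^ n * W ω ^ (-(n : ℤ)) * g (s / (c * W ω) / ρ) ∂P)
      =ᶠ[atTop] fun ρ => ρ ^ n * P.real {ω | c * ρ * W ω * Z ω < s} := by
    filter_upwards [eventually_gt_atTop 0] with ρ hρ
    rw [eq_comm, measureReal_mul_lt_eq_integral (hW.const_mul (c * ρ)) hZ
      (hWZ.comp (measurable_const_mul (c * ρ)) measurable_id) ?_ s, ← integral_const_mul]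
    · refine integral_congr_ae ?_
      filter_upwards [hWpos] with ω hω
      exact hscale ρ (W ω) hρ hω
    · filter_upwards [hWpos] with ω hω
      positivity
  have hVpos : ∀ᵐ ω ∂P, 0 < s / (c * W ω) := by
    filter_upwards [hWpos] with ω hω
    positivity
  convert (tendsto_integral_mul_comp_div_atTop (hWint.const_mul _) (by fun_prop) hVpos hg_meas
    hg_bdd hν_lim).congr' hrepr using 2
  rw [integral_const_mul]
  ring

lemma tendsto_pow_mul_measureReal_mul_lt_of_map_eq_gammaMeasure [IsFiniteMeasure P]
    {N : ℕ} {c s : ℝ} (hN : 0 < N) (hW : AEMeasurable W P) (hZ : AEMeasurable Z P)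
    (hWZ : IndepFun W Z P) (hZlaw : P.map Z = gammaMeasure N 1) (hWpos : ∀ᵐ ω ∂P, 0 < W ω)
    (hWint : Integrable (fun ω => W ω ^ (-(N : ℤ))) P) (hc : 0 < c) (hs : 0 < s) :
    Tendsto (fun ρ => ρ ^ N * P.real {ω | c * ρ * W ω * Z ω < s}) atTop
      (𝓝 ((s / c) ^ N * (∫ ω, W ω ^ (-(N : ℤ)) ∂P) / Gamma (N + 1))) := by
  have hNpos : (0 : ℝ) < N := Nat.cast_pos.2 hN
  have hle : ∀ t, 0 < t → (gammaMeasure N 1).real (Iio t) ≤ (Gamma (N + 1))⁻¹ * t ^ N :=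
    fun t ht => by
      rw [measureReal_Iio_gammaMeasure hNpos one_pos, inv_mul_eq_div, ← rpow_natCast]
      exact cdf_gammaMeasure_le hNpos ht.le
  have hlim : Tendsto (fun t => (gammaMeasure N 1).real (Iio t) / t ^ N) (𝓝[>] 0)
      (𝓝 (Gamma (N + 1))⁻¹) := by
    simpa [measureReal_Iio_gammaMeasure hNpos one_pos] using
      tendsto_cdf_gammaMeasure_div_rpow hNpos
  convert tendsto_pow_mul_measureReal_mul_lt hW hZ hWZ hZlaw hWpos hWint hle hlim hc hs using 2
  ring

end

end ProbabilityTheory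

open Set Real Topology in
theorem second_hop_high_snr_general
    {Ω : Type*} [MeasureSpace Ω] [IsProbabilityMeasure (ℙ : Measure Ω)]
    (N : ℕ) (hN : 1 ≤ N) (X Y Z : Ω → ℝ)
    (hindep : iIndepFun ![X, Y, Z] ℙ)
    (hX : Measure.map X ℙ = gammaMeasure N 1)
    (hY : Measure.map Y ℙ = gammaMeasure N 1)
    (hZ : Measure.map Z ℙ = gammaMeasure N 1)
    (a b κ γ : ℝ) (ha : 0 < a) (hb : 0 < b) (hκ : 0 < κ) (hγ : 0 < γ) :
    Tendsto (fun ρ : ℝ => ρ ^ N *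
        (ℙ {ω | κ * ρ * (a * X ω + b * Y ω) * Z ω < γ}).toReal)
      atTop
      (nhds ((γ / κ) ^ N * (∫ ω, (a * X ω + b * Y ω) ^ (-(N : ℤ))) /
        Real.Gamma (N + 1))) ∧
    Integrable (fun ω => (a * X ω + b * Y ω) ^ (-(N : ℤ))) ℙ := by
  have hNpos : (0 : ℝ) < N := by exact_mod_cast hN
  have := isProbabilityMeasure_gammaMeasure hNpos one_pos
  have hXm : AEMeasurable X ℙ := aemeasurable_of_map_neZero (by rw [hX]; infer_instance)
  have hYm : AEMeasurable Y ℙ := aemeasurable_of_map_neZero (by rw [hY]; infer_instance)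
  have hZm : AEMeasurable Z ℙ := aemeasurable_of_map_neZero (by rw [hZ]; infer_instance)
  have hWZ : IndepFun (fun ω => a * X ω + b * Y ω) Z ℙ :=
    (hindep.indepFun_prodMk₀ (fun i => by fin_cases i <;> assumption) 0 1 2 (by decide)
      (by decide)).comp (φ := fun p : ℝ × ℝ => a * p.1 + b * p.2) (by fun_prop) measurable_id
  have hXpos : ∀ᵐ ω ∂ℙ, 0 < X ω := ae_of_ae_map hXm (hX ▸ ae_pos_gammaMeasure)
  have hYpos : ∀ᵐ ω ∂ℙ, 0 < Y ω := ae_of_ae_map hYm (hY ▸ ae_pos_gammaMeasure)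
  have hmoment : Integrable (fun x => x ^ (-(N / 2 : ℝ))) (gammaMeasure N 1) :=
    integrable_rpow_neg_gammaMeasure hNpos (by linarith)
  have hWint := (hindep.indepFun (by decide : (0 : Fin 3) ≠ 1)).integrable_zpow_neg_linearComb
    N ha hb hXm hYm hXpos hYpos ((hX ▸ hmoment).comp_aemeasurable hXm)
    ((hY ▸ hmoment).comp_aemeasurable hYm)
  have hWpos : ∀ᵐ ω ∂ℙ, 0 < a * X ω + b * Y ω := by
    filter_upwards [hXpos, hYpos] with ω hx hy
    positivity
  exact ⟨tendsto_pow_mul_measureReal_mul_lt_of_map_eq_gammaMeasure hN (by fun_prop) hZm hWZ hZ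
    hWpos hWint hκ hγ, hWint⟩

/-- Rigorous marginal high-SNR behavior of the second-hop SNR of the interference-aided
energy-harvesting relay (eqs. (66)–(71) in the proof of Theorem 5): if `X, Y, Z` are
mutually independent `Gamma(N,1)` random variables and `a, b, κ, γ > 0` with `a ≠ b`, then
`ρ^N · Prob(κρ(aX + bY)Z < γ) → (γ/κ)^N E[(aX+bY)^{−N}]/Γ(N+1)` as `ρ → ∞`, and the
expectation `E[(aX+bY)^{−N}]` is finite. -/
theorem second_hop_high_snr
    {Ω : Type*} [MeasureSpace Ω] [IsProbabilityMeasure (ℙ : Measure Ω)]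
    (N : ℕ) (hN : 1 ≤ N) (X Y Z : Ω → ℝ)
    (hindep : iIndepFun ![X, Y, Z] ℙ)
    (hX : Measure.map X ℙ = gammaMeasure N 1)
    (hY : Measure.map Y ℙ = gammaMeasure N 1)
    (hZ : Measure.map Z ℙ = gammaMeasure N 1)
    (a b κ γ : ℝ) (ha : 0 < a) (hb : 0 < b) (hab : a ≠ b) (hκ : 0 < κ) (hγ : 0 < γ) :
    Tendsto (fun ρ : ℝ => ρ ^ N *
        (ℙ {ω | κ * ρ * (a * X ω + b * Y ω) * Z ω < γ}).toReal)
      atTop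
      (nhds ((γ / κ) ^ N * (∫ ω, (a * X ω + b * Y ω) ^ (-(N : ℤ))) /
        Real.Gamma (N + 1))) ∧
    Integrable (fun ω => (a * X ω + b * Y ω) ^ (-(N : ℤ))) ℙ :=
  second_hop_high_snr_general N hN X Y Z hindep hX hY hZ a b κ γ ha hb hκ hγ
end

section
/- Let N ≥ 1 be an integer and let ρ₁, D₁, D₂, η, γ > 0 be reals, and let C denote the Euler–Mascheroni constant. Define f : (0,1) → ℝ by f(θ) = (1−θ)^{−N} + [ ln((1−θ)·ρ₁) − ln(D₁·γ) − C ] · (D₂/(η·θ))^N / Γ(N). If θ* ∈ (0,1) is a local minimum of f, then N·θ*^{N+1} − b₁·(1−θ*)^{N+1} − c₁·θ*·(1−θ*)^N − e₁·(1−θ*)^{N+1}·ln(1−θ*) = 0, where b₁ = D₂^N·N·(ln ρ₁ − ln(D₁γ) − C)/(η^N·Γ(N)), c₁ = D₂^N/(η^N·Γ(N)) and e₁ = N·D₂^N/(η^N·Γ(N)). -/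
/-!
On `(0, 1)` the function is `(1 - θ)^(-N) + c (log (1 - θ) + L) θ^(-N)` with
`c = D₂^N / (η^N Γ(N))` and `L = log ρ₁ - log (D₁ γ) - C`, so Fermat's theorem gives
`N (1 - θ)^(-N-1) - c ((1 - θ)⁻¹ θ^(-N) + N (log (1 - θ) + L) θ^(-N-1)) = 0` at `θ*`;
multiplying by `θ*^(N+1) (1 - θ*)^(N+1)` clears the denominators and yields the stated equation.
-/

open Filter

noncomputable def noiseLimitedOutage (N : ℕ) (c L θ : ℝ) : ℝ :=
  (1 - θ) ^ (-(N : ℤ)) + c * (Real.log (1 - θ) + L) * θ ^ (-(N : ℤ))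

theorem hasDerivAt_noiseLimitedOutage (N : ℕ) (c L : ℝ) {x : ℝ} (hx₀ : x ≠ 0)
    (hx₁ : 1 - x ≠ 0) :
    HasDerivAt (noiseLimitedOutage N c L)
      (N * (1 - x) ^ (-(N : ℤ) - 1) -
        c * ((1 - x)⁻¹ * x ^ (-(N : ℤ)) + N * (Real.log (1 - x) + L) * x ^ (-(N : ℤ) - 1)))
      x := by
  have hsub : HasDerivAt (fun t : ℝ => 1 - t) (-1) x := by
    simpa using (hasDerivAt_id x).const_sub 1
  have hfst := (hasDerivAt_zpow (-(N : ℤ)) (1 - x) (.inl hx₁)).comp x hsub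
  have hlog := (hsub.log hx₁).add_const L
  have hsnd := (hlog.const_mul c).mul (hasDerivAt_zpow (-(N : ℤ)) x (.inl hx₀))
  exact (hfst.add hsnd).congr_deriv (by push_cast; ring)

theorem IsLocalMin.noiseLimitedOutage_stationary {N : ℕ} {c L x : ℝ}
    (hmin : IsLocalMin (noiseLimitedOutage N c L) x) (hx₀ : x ≠ 0) (hx₁ : 1 - x ≠ 0) :
    N * x ^ (N + 1) - c * x * (1 - x) ^ N -
      c * N * (Real.log (1 - x) + L) * (1 - x) ^ (N + 1) = 0 := by
  have hderiv := hmin.hasDerivAt_eq_zero (hasDerivAt_noiseLimitedOutage N c L hx₀ hx₁)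
  simp only [zpow_sub₀ hx₀, zpow_sub₀ hx₁, zpow_neg, zpow_natCast, zpow_one] at hderiv
  field_simp at hderiv
  linear_combination hderiv

theorem outageFormula_eq_noiseLimitedOutage {N : ℕ} {ρ₁ θ : ℝ} (hρ₁ : 0 < ρ₁)
    (hθ : θ < 1) (D₂ η K Γ : ℝ) :
    ((1 - θ) ^ N)⁻¹ + (Real.log ((1 - θ) * ρ₁) - K) * (D₂ / (η * θ)) ^ N / Γ =
      noiseLimitedOutage N (D₂ ^ N / (η ^ N * Γ)) (Real.log ρ₁ - K) θ := by
  rw [noiseLimitedOutage, Real.log_mul (sub_ne_zero.2 hθ.ne') hρ₁.ne']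
  simp only [zpow_neg, zpow_natCast]
  rw [div_pow, mul_pow]
  ring

theorem optimal_theta_noise_limited_general
    (N : ℕ) (ρ₁ D₁ D₂ η γ : ℝ)
    (hρ₁ : 0 < ρ₁)
    (f : ℝ → ℝ)
    (hf : ∀ θ ∈ Set.Ioo (0 : ℝ) 1, f θ =
      ((1 - θ) ^ N)⁻¹ +
        (Real.log ((1 - θ) * ρ₁) - Real.log (D₁ * γ) - Real.eulerMascheroniConstant) *
          (D₂ / (η * θ)) ^ N / Real.Gamma N)
    (θs : ℝ) (hθs : θs ∈ Set.Ioo (0 : ℝ) 1) (hmin : IsLocalMin f θs) :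
    (N : ℝ) * θs ^ (N + 1) -
      (D₂ ^ N * N * (Real.log ρ₁ - Real.log (D₁ * γ) - Real.eulerMascheroniConstant) /
          (η ^ N * Real.Gamma N)) * (1 - θs) ^ (N + 1) -
      (D₂ ^ N / (η ^ N * Real.Gamma N)) * θs * (1 - θs) ^ N -
      ((N : ℝ) * D₂ ^ N / (η ^ N * Real.Gamma N)) * (1 - θs) ^ (N + 1) *
        Real.log (1 - θs) = 0 := by
  set c := D₂ ^ N / (η ^ N * Real.Gamma N)
  set L := Real.log ρ₁ - Real.log (D₁ * γ) - Real.eulerMascheroniConstant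
  have hfg : f =ᶠ[nhds θs] noiseLimitedOutage N c L := by
    filter_upwards [isOpen_Ioo.mem_nhds hθs] with θ hθ
    rw [hf θ hθ, sub_sub, outageFormula_eq_noiseLimitedOutage hρ₁ hθ.2, ← sub_sub]
  linear_combination
    (hmin.congr hfg).noiseLimitedOutage_stationary hθs.1.ne' (sub_ne_zero.2 hθs.2.ne')

/-- **Proposition 1** (outage-optimal power-splitting ratio, noise-limited system): let
`f(θ) = (1−θ)^{−N} + (ln((1−θ)ρ₁) − ln(D₁γ) − C)(D₂/(ηθ))^N/Γ(N)` on `(0,1)`, where `C` is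
the Euler–Mascheroni constant. If `θ* ∈ (0,1)` is a local minimum of `f`, then
`N θ*^{N+1} − b₁(1−θ*)^{N+1} − c₁θ*(1−θ*)^N − e₁(1−θ*)^{N+1} ln(1−θ*) = 0` with
`b₁ = D₂^N N (ln ρ₁ − ln(D₁γ) − C)/(η^N Γ(N))`, `c₁ = D₂^N/(η^N Γ(N))` and
`e₁ = N D₂^N/(η^N Γ(N))`. -/
theorem optimal_theta_noise_limited
    (N : ℕ) (hN : 1 ≤ N) (ρ₁ D₁ D₂ η γ : ℝ)
    (hρ₁ : 0 < ρ₁) (hD₁ : 0 < D₁) (hD₂ : 0 < D₂) (hη : 0 < η) (hγ : 0 < γ)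
    (f : ℝ → ℝ)
    (hf : ∀ θ ∈ Set.Ioo (0 : ℝ) 1, f θ =
      ((1 - θ) ^ N)⁻¹ +
        (Real.log ((1 - θ) * ρ₁) - Real.log (D₁ * γ) - Real.eulerMascheroniConstant) *
          (D₂ / (η * θ)) ^ N / Real.Gamma N)
    (θs : ℝ) (hθs : θs ∈ Set.Ioo (0 : ℝ) 1) (hmin : IsLocalMin f θs) :
    (N : ℝ) * θs ^ (N + 1) -
      (D₂ ^ N * N * (Real.log ρ₁ - Real.log (D₁ * γ) - Real.eulerMascheroniConstant) /
          (η ^ N * Real.Gamma N)) * (1 - θs) ^ (N + 1) -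
      (D₂ ^ N / (η ^ N * Real.Gamma N)) * θs * (1 - θs) ^ N -
      ((N : ℝ) * D₂ ^ N / (η ^ N * Real.Gamma N)) * (1 - θs) ^ (N + 1) *
        Real.log (1 - θs) = 0 :=
  optimal_theta_noise_limited_general N ρ₁ D₁ D₂ η γ hρ₁ f hf θs hθs hmin
end
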